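/- arXiv:1909.01009 — 6 statements merged into one kernel-verified Lean document; each statement's English description precedes it below -/
import Mathlib

section
/- If a graph G has a fractional [1, k+1/2]-factor h with values in {0, 1/2, 1}, then for every subset S of V(G), iso(G−S) ≤ (k+1/2)|S|. -/
open SimpleGraph

/-- The number of isolated vertices of `G - S` (vertices outside `S` all of whose
neighbors in `G` lie in `S`). -/
noncomputable def isoNum {V : Type*} (G : SimpleGraph V) (S : Set V) : ℕ :=
  {v : V | v ∉ S ∧ ∀ w : V, G.Adj v w → w ∈ S}.ncard

/-- The `h`-degree of a vertex `v`: the sum of `h` over the edges incident with `v`. -/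
noncomputable def hdeg {V : Type*} (G : SimpleGraph V) (h : Sym2 V → ℚ) (v : V) : ℚ :=
  ∑ᶠ e ∈ G.incidenceSet v, h e

/-- `h` is a fractional `[a,b]`-factor of `G`: a function on edges with values in `[0,1]`
(vanishing off the edge set) whose `h`-degree lies in `[a,b]` at every vertex. -/
def IsFracFactor {V : Type*} (G : SimpleGraph V) (a b : ℚ) (h : Sym2 V → ℚ) : Prop :=
  (∀ e, h e ≠ 0 → e ∈ G.edgeSet) ∧ (∀ e, 0 ≤ h e ∧ h e ≤ 1) ∧
    ∀ v : V, a ≤ hdeg G h v ∧ hdeg G h v ≤ b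

/-- If `G` has a fractional `[1, k+1/2]`-factor `h` with values in `{0, 1/2, 1}`, then
`iso(G-S) ≤ (k+1/2)|S|` for every `S ⊆ V(G)`. -/
theorem stmt1 {V : Type*} [Fintype V] (G : SimpleGraph V) (k : ℕ) (hk : 1 ≤ k)
    (h : Sym2 V → ℚ) (hfrac : IsFracFactor G 1 ((k : ℚ) + 1/2) h)
    (hval : ∀ e : Sym2 V, h e = 0 ∨ h e = 1/2 ∨ h e = 1) :
    ∀ S : Set V, (isoNum G S : ℚ) ≤ ((k : ℚ) + 1/2) * S.ncard := by
  classical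
  intro S
  obtain ⟨hsupp, hbound, hdegb⟩ := hfrac
  set I : Finset V := Finset.univ.filter
      (fun v => v ∉ S ∧ ∀ w : V, G.Adj v w → w ∈ S) with hI
  set T : Finset V := Finset.univ.filter (fun v => v ∈ S) with hT
  have hImem : ∀ v : V, v ∈ I ↔ (v ∉ S ∧ ∀ w : V, G.Adj v w → w ∈ S) := by
    intro v; simp [hI]
  have hTmem : ∀ v : V, v ∈ T ↔ v ∈ S := by intro v; simp [hT]
  have hiso : (isoNum G S : ℚ) = (I.card : ℚ) := by
    rw [isoNum]
    congr 1
    rw [Set.ncard_eq_toFinset_card']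
    congr 1
    ext v
    simp [hI]
  have hScard : (S.ncard : ℚ) = (T.card : ℚ) := by
    rw [Set.ncard_eq_toFinset_card']
    congr 2
    ext v
    simp [hT]
  have hdeg_eq : ∀ v : V, hdeg G h v = ∑ e ∈ G.edgeFinset, if v ∈ e then h e else 0 := by
    intro v
    rw [hdeg]
    have hs : G.incidenceSet v = ↑(G.edgeFinset.filter (fun e => v ∈ e)) := by
      ext e
      simp [SimpleGraph.incidenceSet, and_comm]
    rw [hs, finsum_mem_coe_finset, Finset.sum_filter]
  have key : ∀ e ∈ G.edgeFinset,
      (∑ v ∈ I, if v ∈ e then h e else 0) ≤ ∑ v ∈ T, if v ∈ e then h e else 0 := by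
    intro e he
    induction e with
    | _ a b =>
      have hab : G.Adj a b := by simpa using he
      have hne : a ≠ b := hab.ne
      have h0 : 0 ≤ h s(a, b) := (hbound s(a, b)).1
      have hsum : ∀ F : Finset V,
          (∑ v ∈ F, if v ∈ s(a, b) then h s(a, b) else 0) =
            (if a ∈ F then h s(a, b) else 0) + (if b ∈ F then h s(a, b) else 0) := by
        intro F
        have step : ∀ v : V, (if v ∈ s(a, b) then h s(a, b) else 0) =
            (if v = a then h s(a, b) else 0) + (if v = b then h s(a, b) else 0) := by
          intro v
          by_cases h1 : v = a <;> by_cases h2 : v = b <;>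
            simp_all [Sym2.mem_iff]
        rw [Finset.sum_congr rfl (fun v _ => step v), Finset.sum_add_distrib,
          Finset.sum_ite_eq' F a, Finset.sum_ite_eq' F b]
      rw [hsum I, hsum T]
      by_cases ha : a ∈ I <;> by_cases hb : b ∈ I
      · exact absurd (((hImem a).1 ha).2 b hab) ((hImem b).1 hb).1
      · have hbS : b ∈ S := ((hImem a).1 ha).2 b hab
        have haS : a ∉ S := ((hImem a).1 ha).1
        simp only [ha, hb, if_pos, if_neg, (hTmem b).2 hbS,
          if_neg (fun hc => haS ((hTmem a).1 hc))]
        simp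
      · have haS : a ∈ S := ((hImem b).1 hb).2 a hab.symm
        have hbS : b ∉ S := ((hImem b).1 hb).1
        simp only [ha, hb, if_pos, if_neg, (hTmem a).2 haS,
          if_neg (fun hc => hbS ((hTmem b).1 hc))]
        simp
      · simp only [if_neg ha, if_neg hb]
        have : (0:ℚ) ≤ (if a ∈ T then h s(a, b) else 0) := by positivity
        have h2 : (0:ℚ) ≤ (if b ∈ T then h s(a, b) else 0) := by positivity
        linarith
  have main : (I.card : ℚ) ≤ ((k : ℚ) + 1/2) * T.card := by
    calc (I.card : ℚ) = ∑ _v ∈ I, (1 : ℚ) := by simp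
    _ ≤ ∑ v ∈ I, hdeg G h v := Finset.sum_le_sum fun v _ => (hdegb v).1
    _ = ∑ v ∈ I, ∑ e ∈ G.edgeFinset, (if v ∈ e then h e else 0) :=
        Finset.sum_congr rfl fun v _ => hdeg_eq v
    _ = ∑ e ∈ G.edgeFinset, ∑ v ∈ I, (if v ∈ e then h e else 0) := Finset.sum_comm
    _ ≤ ∑ e ∈ G.edgeFinset, ∑ v ∈ T, (if v ∈ e then h e else 0) :=
        Finset.sum_le_sum key
    _ = ∑ v ∈ T, ∑ e ∈ G.edgeFinset, (if v ∈ e then h e else 0) := Finset.sum_comm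
    _ = ∑ v ∈ T, hdeg G h v := Finset.sum_congr rfl fun v _ => (hdeg_eq v).symm
    _ ≤ ∑ _v ∈ T, ((k : ℚ) + 1/2) := Finset.sum_le_sum fun v _ => (hdegb v).2
    _ = ((k : ℚ) + 1/2) * T.card := by rw [Finset.sum_const, nsmul_eq_mul, mul_comm]
  rw [hiso, hScard]
  exact main
end

section
/- A graph G has a spanning subgraph each of whose components is a single edge K₂ or a cycle C_n (n ≥ 3) if and only if iso(G−S) ≤ |S| for all S ⊆ V(G). (Tutte's theorem on {K₂, C_n}-factors.) -/
open SimpleGraph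

/-- The connected component of `v` in `F`, viewed as a graph on its vertex set:
the graph induced by `F` on the component containing `v`. -/
def compAt {V : Type*} (F : SimpleGraph V) (v : V) :
    SimpleGraph (F.connectedComponentMk v).supp :=
  F.induce (F.connectedComponentMk v).supp

-- ===== basic helpers =====

private def permGraph {V : Type*} (σ : Equiv.Perm V) : SimpleGraph V :=
  SimpleGraph.fromRel (fun a b => σ a = b)

private lemma permGraph_adj {V : Type*} (σ : Equiv.Perm V) (a b : V) :
    (permGraph σ).Adj a b ↔ a ≠ b ∧ (σ a = b ∨ σ b = a) := by
  simp [permGraph, SimpleGraph.fromRel_adj]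

private lemma compAt_adj {V : Type*} (F : SimpleGraph V) (v : V)
    (a b : (F.connectedComponentMk v).supp) :
    (compAt F v).Adj a b ↔ F.Adj a.val b.val := Iff.rfl

private lemma mod_succ_ne {m i : ℕ} (h2 : 2 ≤ m) (hi : i < m) : (i + 1) % m ≠ i := by
  rcases Nat.lt_or_ge (i + 1) m with h | h
  · rw [Nat.mod_eq_of_lt h]; omega
  · have hxx : i + 1 = m := by omega
    rw [hxx, Nat.mod_self]; omega

private lemma permGraph_walk_orbit {V : Type*} [Fintype V] (σ : Equiv.Perm V) :
    ∀ {a b : V}, (permGraph σ).Walk a b → ∃ k : ℕ, σ^[k] a = b := by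
  intro a b w
  induction w with
  | nil => exact ⟨0, rfl⟩
  | @cons u c b h p ih =>
    obtain ⟨k, hk⟩ := ih
    rw [permGraph_adj] at h
    rcases h.2 with h1 | h1
    · exact ⟨k + 1, by rw [Function.iterate_succ_apply, h1, hk]⟩
    · have hN : 0 < orderOf σ := orderOf_pos σ
      have hfix : ∀ x : V, σ^[orderOf σ] x = x := by
        intro x
        rw [Equiv.Perm.iterate_eq_pow, pow_orderOf_eq_one]
        rfl
      have h2 : σ^[orderOf σ - 1] u = c := by
        have h3 : σ^[(orderOf σ - 1) + 1] c = c := by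
          rw [Nat.sub_add_cancel hN]; exact hfix c
        rw [Function.iterate_succ_apply] at h3
        rw [← h1]; exact h3
      refine ⟨k + (orderOf σ - 1), ?_⟩
      rw [Function.iterate_add_apply, h2, hk]

private lemma permGraph_mem_supp_iff {V : Type*} [Fintype V] (σ : Equiv.Perm V)
    (hσ : ∀ x : V, σ x ≠ x) (v u : V) :
    u ∈ ((permGraph σ).connectedComponentMk v).supp ↔ ∃ k : ℕ, σ^[k] v = u := by
  constructor
  · intro hu
    rw [ConnectedComponent.mem_supp_iff] at hu
    obtain ⟨w⟩ := (ConnectedComponent.exact hu).symm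
    exact permGraph_walk_orbit σ w
  · rintro ⟨k, rfl⟩
    rw [ConnectedComponent.mem_supp_iff]
    induction k with
    | zero => rfl
    | succ k ih =>
      have hne : σ^[k] v ≠ σ^[k + 1] v := by
        rw [Function.iterate_succ_apply']
        exact fun h => hσ _ h.symm
      have hadj : (permGraph σ).Adj (σ^[k] v) (σ^[k + 1] v) :=
        (permGraph_adj σ _ _).mpr ⟨hne, Or.inl (Function.iterate_succ_apply' σ k v).symm⟩
      exact (ConnectedComponent.sound hadj.symm.reachable).trans ih

private lemma permGraph_comp {V : Type*} [Fintype V] (σ : Equiv.Perm V)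
    (hσ : ∀ x : V, σ x ≠ x) (v : V) :
    Nonempty (compAt (permGraph σ) v ≃g SimpleGraph.pathGraph 2) ∨
      ∃ n : ℕ, 3 ≤ n ∧ Nonempty (compAt (permGraph σ) v ≃g SimpleGraph.cycleGraph n) := by
  classical
  set F := permGraph σ with hFdef
  set m := Function.minimalPeriod ⇑σ v with hm
  have hper : Function.IsPeriodicPt ⇑σ (orderOf σ) v := by
    show σ^[orderOf σ] v = v
    rw [Equiv.Perm.iterate_eq_pow, pow_orderOf_eq_one]
    rfl
  have hm1 : 0 < m := Function.IsPeriodicPt.minimalPeriod_pos (orderOf_pos σ) hper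
  have hmne1 : m ≠ 1 := by
    intro h1
    have h2 := Function.iterate_minimalPeriod (f := ⇑σ) (x := v)
    rw [← hm, h1, Function.iterate_one] at h2
    exact hσ v h2
  have hm2 : 2 ≤ m := by omega
  have hmem : ∀ k : ℕ, σ^[k] v ∈ (F.connectedComponentMk v).supp := fun k =>
    (permGraph_mem_supp_iff σ hσ v _).mpr ⟨k, rfl⟩
  have hbij : Function.Bijective
      (fun i : Fin m => (⟨σ^[i.val] v, hmem i.val⟩ : (F.connectedComponentMk v).supp)) := by
    constructor
    · intro i j hij
      apply Fin.ext
      exact (Function.iterate_eq_iterate_iff_of_lt_minimalPeriod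
        (hm ▸ i.isLt) (hm ▸ j.isLt)).mp (congrArg Subtype.val hij)
    · rintro ⟨u, hu⟩
      obtain ⟨k, hk⟩ := (permGraph_mem_supp_iff σ hσ v u).mp hu
      refine ⟨⟨k % m, Nat.mod_lt _ hm1⟩, ?_⟩
      apply Subtype.ext
      show σ^[k % m] v = u
      rw [hm, Function.iterate_mod_minimalPeriod_eq]
      exact hk
  set e := Equiv.ofBijective _ hbij with he
  have hadjN : ∀ i j : ℕ, i < m → j < m →
      (F.Adj (σ^[i] v) (σ^[j] v) ↔ ((i + 1) % m = j ∨ (j + 1) % m = i)) := by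
    have key : ∀ a b : ℕ, a < m → b < m → (σ (σ^[a] v) = σ^[b] v ↔ (a + 1) % m = b) := by
      intro a b ha hb
      rw [← Function.iterate_succ_apply' σ a v]
      constructor
      · intro h
        have h2 : σ^[(a + 1) % m] v = σ^[b] v := by
          rw [hm, Function.iterate_mod_minimalPeriod_eq]
          exact h
        exact (Function.iterate_eq_iterate_iff_of_lt_minimalPeriod
          (hm ▸ Nat.mod_lt _ hm1) (hm ▸ hb)).mp h2
      · intro h
        rw [← h, hm, Function.iterate_mod_minimalPeriod_eq]
    intro i j hi hj
    rw [hFdef, permGraph_adj]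
    constructor
    · rintro ⟨hne, h | h⟩
      · exact Or.inl ((key i j hi hj).mp h)
      · exact Or.inr ((key j i hj hi).mp h)
    · intro h
      have hne : σ^[i] v ≠ σ^[j] v := by
        intro heq
        have hij : i = j := (Function.iterate_eq_iterate_iff_of_lt_minimalPeriod
          (hm ▸ hi) (hm ▸ hj)).mp heq
        subst hij
        rcases h with h | h <;> exact mod_succ_ne hm2 hi h
      refine ⟨hne, ?_⟩
      rcases h with h | h
      · exact Or.inl ((key i j hi hj).mpr h)
      · exact Or.inr ((key j i hj hi).mpr h)
  haveI : NeZero m := ⟨by omega⟩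
  have hv1 : ((1 : Fin m) : ℕ) = 1 := by
    rw [Fin.val_one']
    exact Nat.mod_eq_of_lt (by omega)
  have hfin : ∀ i j : Fin m, ((j - i).val = 1 ↔ (i.val + 1) % m = j.val) := by
    intro i j
    constructor
    · intro h
      have h1 : j - i = 1 := Fin.ext (by rw [h, hv1])
      have hj : j = 1 + i := by rwa [sub_eq_iff_eq_add] at h1
      rw [hj, Fin.val_add, hv1, Nat.add_comm]
    · intro h
      have hj : j = 1 + i := Fin.ext (by rw [Fin.val_add, hv1, Nat.add_comm, h])
      rw [hj, add_sub_cancel_right]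
      exact hv1
  rcases Nat.lt_or_ge m 3 with h3 | h3
  · -- m = 2 : path graph
    have hm2' : m = 2 := by omega
    left
    refine ⟨SimpleGraph.Iso.symm ⟨(finCongr hm2'.symm).trans e, @fun a b => ?_⟩⟩
    show F.Adj (σ^[((finCongr hm2'.symm) a).val] v) (σ^[((finCongr hm2'.symm) b).val] v)
        ↔ (SimpleGraph.pathGraph 2).Adj a b
    have hca : ((finCongr hm2'.symm) a).val = a.val := rfl
    have hcb : ((finCongr hm2'.symm) b).val = b.val := rfl
    rw [hca, hcb, hadjN a.val b.val (by omega) (by omega), SimpleGraph.pathGraph_adj]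
    have ha2 : a.val < 2 := a.isLt
    have hb2 : b.val < 2 := b.isLt
    rw [hm2']
    omega
  · -- m ≥ 3 : cycle graph
    right
    refine ⟨m, h3, ⟨SimpleGraph.Iso.symm ⟨e, @fun a b => ?_⟩⟩⟩
    show F.Adj (σ^[a.val] v) (σ^[b.val] v) ↔ (SimpleGraph.cycleGraph m).Adj a b
    rw [hadjN a.val b.val a.isLt b.isLt, SimpleGraph.cycleGraph_adj']
    rw [hfin b a, hfin a b]
    exact or_comm

private lemma exists_adj_perm_of_path2 {α : Type*} (X : SimpleGraph α)
    (e : X ≃g SimpleGraph.pathGraph 2) :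
    ∃ g : Equiv.Perm α, ∀ x, X.Adj x (g x) := by
  refine ⟨e.toEquiv.trans ((Equiv.swap 0 1).trans e.toEquiv.symm), fun x => ?_⟩
  have h2 : ∀ y : Fin 2, (SimpleGraph.pathGraph 2).Adj y (Equiv.swap 0 1 y) := by
    intro y
    fin_cases y <;>
      simp [SimpleGraph.pathGraph_adj, Equiv.swap_apply_left, Equiv.swap_apply_right]
  have h3 : X.Adj (e.symm (e x)) (e.symm (Equiv.swap 0 1 (e x))) :=
    e.symm.map_rel_iff.mpr (h2 (e x))
  rw [RelIso.symm_apply_apply] at h3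
  exact h3

private lemma exists_adj_perm_of_cycle {α : Type*} (X : SimpleGraph α) (n : ℕ) (hn : 3 ≤ n)
    (e : X ≃g SimpleGraph.cycleGraph n) :
    ∃ g : Equiv.Perm α, ∀ x, X.Adj x (g x) := by
  haveI : NeZero n := ⟨by omega⟩
  refine ⟨e.toEquiv.trans ((Equiv.addRight (1 : Fin n)).trans e.toEquiv.symm), fun x => ?_⟩
  have hv1 : ((1 : Fin n) : ℕ) = 1 := by
    rw [Fin.val_one']
    exact Nat.mod_eq_of_lt (by omega)
  have h2 : (SimpleGraph.cycleGraph n).Adj (e x) (e x + 1) := by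
    rw [SimpleGraph.cycleGraph_adj']
    right
    rw [add_sub_cancel_left]
    exact hv1
  have h3 : X.Adj (e.symm (e x)) (e.symm (e x + 1)) := e.symm.map_rel_iff.mpr h2
  rw [RelIso.symm_apply_apply] at h3
  exact h3

private lemma exists_perm_of_factor {V : Type*} [Fintype V] (F : SimpleGraph V)
    (hF : ∀ v : V, Nonempty (compAt F v ≃g SimpleGraph.pathGraph 2) ∨
        ∃ n : ℕ, 3 ≤ n ∧ Nonempty (compAt F v ≃g SimpleGraph.cycleGraph n)) :
    ∃ f : V → V, Function.Injective f ∧ ∀ v, F.Adj v (f v) := by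
  classical
  have hc : ∀ c : F.ConnectedComponent,
      ∃ g : Equiv.Perm ((F.connectedComponentMk (Quot.out c)).supp),
        ∀ x, F.Adj x.val (g x).val := by
    intro c
    rcases hF (Quot.out c) with he | ⟨n, hn, he⟩
    · obtain ⟨e⟩ := he
      obtain ⟨g, hg⟩ := exists_adj_perm_of_path2 _ e
      exact ⟨g, fun x => hg x⟩
    · obtain ⟨e⟩ := he
      obtain ⟨g, hg⟩ := exists_adj_perm_of_cycle _ n hn e
      exact ⟨g, fun x => hg x⟩
  choose g hg using hc
  have hvmem : ∀ v : V,
      v ∈ (F.connectedComponentMk (Quot.out (F.connectedComponentMk v))).supp := by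
    intro v
    rw [ConnectedComponent.mem_supp_iff]
    exact (Quot.out_eq (F.connectedComponentMk v)).symm
  let f : V → V := fun v => Equiv.Perm.ofSubtype (g (F.connectedComponentMk v)) v
  have hf1 : ∀ v : V, f v = (g (F.connectedComponentMk v) ⟨v, hvmem v⟩).val := by
    intro v
    exact congrArg Subtype.val (congrArg _ rfl) ▸
      Equiv.Perm.ofSubtype_apply_of_mem (g (F.connectedComponentMk v)) (hvmem v)
  have hfadj : ∀ v, F.Adj v (f v) := by
    intro v
    rw [hf1]
    exact hg _ ⟨v, hvmem v⟩
  have hcomp_f : ∀ v, F.connectedComponentMk (f v) = F.connectedComponentMk v := by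
    intro v
    have h := (g (F.connectedComponentMk v) ⟨v, hvmem v⟩).2
    rw [ConnectedComponent.mem_supp_iff] at h
    rw [hf1 v, h]
    exact Quot.out_eq _
  have hfinj : Function.Injective f := by
    intro u w huw
    have huw' : Equiv.Perm.ofSubtype (g (F.connectedComponentMk u)) u
        = Equiv.Perm.ofSubtype (g (F.connectedComponentMk w)) w := huw
    have hcc : F.connectedComponentMk u = F.connectedComponentMk w := by
      rw [← hcomp_f u, ← hcomp_f w, huw]
    rw [hcc] at huw'
    exact (Equiv.Perm.ofSubtype (g (F.connectedComponentMk w))).injective huw'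
  exact ⟨f, hfinj, hfadj⟩

/-- Tutte's theorem: `G` has a `{K₂, Cₙ (n ≥ 3)}`-factor iff `iso(G-S) ≤ |S|`
for all `S ⊆ V(G)`. -/
theorem stmt3 {V : Type*} [Fintype V] (G : SimpleGraph V) :
    (∃ F : SimpleGraph V, F ≤ G ∧ ∀ v : V,
        Nonempty (compAt F v ≃g SimpleGraph.pathGraph 2) ∨
          ∃ n : ℕ, 3 ≤ n ∧ Nonempty (compAt F v ≃g SimpleGraph.cycleGraph n)) ↔
      ∀ S : Set V, isoNum G S ≤ S.ncard := by
  classical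
  constructor
  · rintro ⟨F, hFG, hF⟩ S
    obtain ⟨f, hfinj, hfadj⟩ := exists_perm_of_factor F hF
    have hsub : f '' {v : V | v ∉ S ∧ ∀ w : V, G.Adj v w → w ∈ S} ⊆ S := by
      rintro _ ⟨v, hv, rfl⟩
      exact hv.2 (f v) (hFG (hfadj v))
    calc isoNum G S
        = (f '' {v : V | v ∉ S ∧ ∀ w : V, G.Adj v w → w ∈ S}).ncard :=
          (Set.ncard_image_of_injective _ hfinj).symm
      _ ≤ S.ncard := Set.ncard_le_ncard hsub (Set.toFinite S)
  · intro hiso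
    set t : V → Finset V := fun v => ((G.neighborSet v).toFinite.toFinset) with ht
    have hmem_t : ∀ v w : V, w ∈ t v ↔ G.Adj v w := by
      intro v w
      simp [ht, Set.Finite.mem_toFinset]
    have hall : ∀ A : Finset V, A.card ≤ (A.biUnion t).card := by
      intro A
      set N := A.biUnion t with hN
      set A₁ := A.filter (fun a => a ∉ N) with hA₁
      set S := A₁.biUnion t with hS
      have hA₁A : A₁ ⊆ A := Finset.filter_subset _ A
      have hA₁S : (↑A₁ : Set V) ⊆
          {x : V | x ∉ (↑S : Set V) ∧ ∀ w : V, G.Adj x w → w ∈ (↑S : Set V)} := by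
        intro a ha
        rw [Finset.mem_coe, hA₁, Finset.mem_filter] at ha
        constructor
        · intro haS
          rw [Finset.mem_coe, hS, Finset.mem_biUnion] at haS
          obtain ⟨b, hb, hab⟩ := haS
          rw [hA₁, Finset.mem_filter] at hb
          exact ha.2 (Finset.mem_biUnion.mpr ⟨b, hb.1, hab⟩)
        · intro w hw
          rw [Finset.mem_coe, hS]
          exact Finset.mem_biUnion.mpr
            ⟨a, by rw [hA₁, Finset.mem_filter]; exact ha, (hmem_t a w).mpr hw⟩
      have h1 : A₁.card ≤ S.card := by
        calc A₁.card = (↑A₁ : Set V).ncard := (Set.ncard_coe_finset A₁).symm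
          _ ≤ isoNum G (↑S : Set V) := Set.ncard_le_ncard hA₁S (Set.toFinite _)
          _ ≤ (↑S : Set V).ncard := hiso (↑S : Set V)
          _ = S.card := Set.ncard_coe_finset S
      have hSN : S ⊆ N := Finset.biUnion_subset_biUnion_of_subset_left t hA₁A
      have hSA : ∀ x ∈ S, x ∉ A := by
        intro x hx hxA
        obtain ⟨b, hb, hxb⟩ := Finset.mem_biUnion.mp hx
        rw [hA₁, Finset.mem_filter] at hb
        exact hb.2 (Finset.mem_biUnion.mpr
          ⟨x, hxA, (hmem_t x b).mpr ((hmem_t b x).mp hxb).symm⟩)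
      have hsplit : (A.filter (fun a => a ∈ N)).card + A₁.card = A.card := by
        rw [hA₁]
        exact Finset.card_filter_add_card_filter_not (fun a => a ∈ N)
      have hdisj : Disjoint (A.filter (fun a => a ∈ N)) S := by
        rw [Finset.disjoint_left]
        intro x hx hxS
        exact hSA x hxS (Finset.mem_filter.mp hx).1
      have hunion : (A.filter (fun a => a ∈ N)) ∪ S ⊆ N := by
        intro x hx
        rcases Finset.mem_union.mp hx with h | h
        · exact (Finset.mem_filter.mp h).2
        · exact hSN h
      have hcard : (A.filter (fun a => a ∈ N)).card + S.card ≤ N.card := by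
        rw [← Finset.card_union_of_disjoint hdisj]
        exact Finset.card_le_card hunion
      omega
    obtain ⟨f, hfinj, hft⟩ := (Finset.all_card_le_biUnion_card_iff_existsInjective' t).mp hall
    have hfadj : ∀ v : V, G.Adj v (f v) := fun v => (hmem_t v (f v)).mp (hft v)
    have hfbij : Function.Bijective f := Finite.injective_iff_bijective.mp hfinj
    set σ := Equiv.ofBijective f hfbij with hσdef
    have hσadj : ∀ v : V, G.Adj v (σ v) := hfadj
    have hσne : ∀ x : V, σ x ≠ x := fun x h => G.irrefl (h ▸ hσadj x)
    refine ⟨permGraph σ, ?_, fun v => permGraph_comp σ hσne v⟩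
    intro a b hab
    rw [permGraph_adj] at hab
    rcases hab.2 with h | h
    · exact h ▸ hσadj a
    · exact (h ▸ hσadj b).symm
end

section
/- For an integer k ≥ 2, a graph G has a spanning subgraph each of whose components is a star K_{1,j} with 1 ≤ j ≤ k if and only if iso(G−S) ≤ k|S| for all S ⊆ V(G). (Amahashi–Kano theorem.) -/
open SimpleGraph

/-!
Every isolated vertex of `G - S` has a neighbour in `S` in any spanning subgraph with degrees in
`[1, k]`, and each vertex of `S` serves at most `k` of them; this gives `iso(G - S) ≤ k |S|`.

Conversely, induct on `|V| + |E|`. If some nonempty `S` has `k (|S| - 1) < iso(G - S)`, take one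
maximising the deficiency `iso(G - S) - k |S|`. Hall's theorem sends the isolated vertices `I` of
`G - S` to neighbours in `S`, at most `k` to each, and the bound on `iso(G - S)` forces every vertex
of `S` to receive one: these are stars centred in `S`. Maximality of the deficiency passes the
condition on to `G - (S ∪ I)`, which is covered by induction. Otherwise every nonempty `S` has
slack `k ≥ 2` and every vertex has two neighbours, so deleting any edge keeps the condition.
-/

theorem Set.ncard_le_mul_ncard_of_mapsTo {α β : Type*} {f : α → β} {s : Set α} {t : Set β}
    (hs : s.Finite) (ht : t.Finite) (hf : Set.MapsTo f s t) {n : ℕ}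
    (hn : ∀ b ∈ t, {a ∈ s | f a = b}.ncard ≤ n) : s.ncard ≤ n * t.ncard := by
  classical
  rw [Set.ncard_eq_toFinset_card s hs, Set.ncard_eq_toFinset_card t ht]
  refine Finset.card_le_mul_card_image_of_maps_to
    (fun a ha => by simpa using hf (by simpa using ha)) n fun b hb => ?_
  rw [← Set.ncard_coe_finset]
  simpa using hn b (by simpa using hb)

namespace SimpleGraph

variable {V : Type*}

def isoSet (G : SimpleGraph V) (S : Set V) : Set V :=
  {v | v ∉ S ∧ ∀ w, G.Adj v w → w ∈ S}

theorem isoNum_eq_ncard_isoSet (G : SimpleGraph V) (S : Set V) :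
    isoNum G S = (isoSet G S).ncard := rfl

theorem isoNum_le_mul_ncard_of_le {G F : SimpleGraph V} [Finite V] {k : ℕ} (hFG : F ≤ G)
    (hpos : ∀ v, 1 ≤ (F.neighborSet v).ncard) (hle : ∀ v, (F.neighborSet v).ncard ≤ k)
    (S : Set V) : isoNum G S ≤ k * S.ncard := by
  choose f hf using fun v => Set.nonempty_of_ncard_ne_zero (Nat.one_le_iff_ne_zero.mp (hpos v))
  refine Set.ncard_le_mul_ncard_of_mapsTo (Set.toFinite _) (Set.toFinite _)
    (fun v hv => hv.2 _ (hFG (hf v))) fun s _ => ?_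
  calc {v ∈ isoSet G S | f v = s}.ncard ≤ (F.neighborSet s).ncard :=
        Set.ncard_le_ncard (fun v hv => (hv.2 ▸ hf v).symm) (Set.toFinite _)
    _ ≤ k := hle s

def starGraphIsoCompleteBipartiteGraph [DecidableEq V] (r : V) :
    starGraph r ≃g completeBipartiteGraph Unit {x // x ≠ r} where
  toFun x := if h : x = r then .inl () else .inr ⟨x, h⟩
  invFun := Sum.elim (fun _ => r) Subtype.val
  left_inv x := by by_cases h : x = r <;> simp [h]
  right_inv := by rintro (⟨⟨⟩⟩ | ⟨x, hx⟩) <;> simp_all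
  map_rel_iff' {x y} := by
    by_cases hx : x = r <;> by_cases hy : y = r <;> simp [hx, hy, Ne.symm]

theorem ncard_neighborSet_completeBipartiteGraph {α β : Type*} (x : α ⊕ β) :
    ((completeBipartiteGraph α β).neighborSet x).ncard =
      x.elim (fun _ => Nat.card β) (fun _ => Nat.card α) := by
  rcases x with a | b
  · rw [show (completeBipartiteGraph α β).neighborSet (.inl a) = Set.range Sum.inr by
      ext (_ | _) <;> simp]
    simp [Set.ncard_range_of_injective Sum.inr_injective]
  · rw [show (completeBipartiteGraph α β).neighborSet (.inr b) = Set.range Sum.inl by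
      ext (_ | _) <;> simp]
    simp [Set.ncard_range_of_injective Sum.inl_injective]

theorem ncard_neighborSet_induce_supp {F : SimpleGraph V} (C : F.ConnectedComponent)
    (u : C.supp) : ((F.induce C.supp).neighborSet u).ncard = (F.neighborSet u).ncard := by
  rw [neighborSet_induce]
  exact Set.ncard_preimage_of_injective_subset_range Subtype.val_injective
    fun w hw => ⟨⟨w, C.mem_supp_of_adj_mem_supp u.2 hw⟩, rfl⟩

theorem ncard_neighborSet_eq_of_iso {F : SimpleGraph V} {v : V} {α β : Type*}
    (φ : compAt F v ≃g completeBipartiteGraph α β) (u : (F.connectedComponentMk v).supp) :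
    (F.neighborSet u).ncard = (φ u).elim (fun _ => Nat.card β) (fun _ => Nat.card α) := by
  rw [← ncard_neighborSet_induce_supp _ u, ← ncard_neighborSet_completeBipartiteGraph,
    ← Nat.card_coe_set_eq, ← Nat.card_coe_set_eq]
  exact Nat.card_congr (φ.mapNeighborSet u)

theorem ncard_neighborSet_mem_Icc_of_iso {F : SimpleGraph V} {v : V} {j : ℕ} (hj : 1 ≤ j)
    (φ : compAt F v ≃g completeBipartiteGraph (Fin 1) (Fin j)) :
    1 ≤ (F.neighborSet v).ncard ∧ (F.neighborSet v).ncard ≤ j := by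
  rw [ncard_neighborSet_eq_of_iso φ ⟨v, ConnectedComponent.connectedComponentMk_mem⟩]
  cases φ ⟨v, _⟩ <;> simp [hj]

/-- Spanning subgraphs with these properties are exactly the disjoint unions of stars `K_{1,j}`
with `1 ≤ j ≤ k`. -/
structure IsStarFactor (k : ℕ) (F : SimpleGraph V) : Prop where
  one_le_ncard_neighborSet (v : V) : 1 ≤ (F.neighborSet v).ncard
  ncard_neighborSet_le (v : V) : (F.neighborSet v).ncard ≤ k
  ncard_neighborSet_eq_one_of_adj {x y : V} (h : F.Adj x y) :
    (F.neighborSet x).ncard = 1 ∨ (F.neighborSet y).ncard = 1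

theorem eq_of_adj_of_ncard_neighborSet_eq_one {F : SimpleGraph V} {x y z : V}
    (hx : (F.neighborSet x).ncard = 1) (hy : F.Adj x y) (hz : F.Adj x z) : z = y := by
  obtain ⟨a, ha⟩ := Set.ncard_eq_one.mp hx
  have hy' : y ∈ F.neighborSet x := hy
  have hz' : z ∈ F.neighborSet x := hz
  rw [ha] at hy' hz'
  exact hz'.trans hy'.symm

theorem IsStarFactor.exists_center {k : ℕ} {F : SimpleGraph V} (hF : IsStarFactor k F)
    (v : V) : ∃ c, F.Reachable v c ∧ ∀ u w, F.Adj c u → F.Adj u w → w = c := by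
  obtain ⟨w, hvw⟩ := Set.nonempty_of_ncard_ne_zero
    (Nat.one_le_iff_ne_zero.mp (hF.one_le_ncard_neighborSet v))
  have leaf_of_adj {c u x : V} (hc : (F.neighborSet c).ncard ≠ 1) (hcu : F.Adj c u)
      (hux : F.Adj u x) : x = c :=
    eq_of_adj_of_ncard_neighborSet_eq_one
      ((hF.ncard_neighborSet_eq_one_of_adj hcu).resolve_left hc) hcu.symm hux
  by_cases hv : (F.neighborSet v).ncard = 1
  · refine ⟨w, hvw.reachable, fun u x hwu hux => ?_⟩
    by_cases hw : (F.neighborSet w).ncard = 1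
    · obtain rfl := eq_of_adj_of_ncard_neighborSet_eq_one hw hvw.symm hwu
      exact eq_of_adj_of_ncard_neighborSet_eq_one hv hvw hux
    · exact leaf_of_adj hw hwu hux
  · exact ⟨v, .rfl, fun u x => leaf_of_adj hv⟩

theorem eq_or_adj_of_reachable {F : SimpleGraph V} {c : V}
    (hc : ∀ u w, F.Adj c u → F.Adj u w → w = c) {y : V} (h : F.Reachable c y) :
    y = c ∨ F.Adj c y := by
  rw [reachable_iff_reflTransGen] at h
  induction h with
  | refl => exact .inl rfl
  | tail _ hxy ih =>
    rcases ih with rfl | hcx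
    · exact .inr hxy
    · exact .inl (hc _ _ hcx hxy)

theorem IsStarFactor.exists_iso_compAt [Finite V] {k : ℕ} {F : SimpleGraph V}
    (hF : IsStarFactor k F) (v : V) : ∃ j, 1 ≤ j ∧ j ≤ k ∧
      Nonempty (compAt F v ≃g completeBipartiteGraph (Fin 1) (Fin j)) := by
  classical
  obtain ⟨c, hvc, hc⟩ := hF.exists_center v
  set C := F.connectedComponentMk v
  have hcC : c ∈ C.supp := (ConnectedComponent.sound hvc).symm
  have hstar : compAt F v = starGraph ⟨c, hcC⟩ := by
    have hreach (x : C.supp) : x.1 = c ∨ F.Adj c x :=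
      eq_or_adj_of_reachable hc (ConnectedComponent.exact (hcC.trans x.2.symm))
    ext x y
    simp only [compAt, comap_adj, Function.Embedding.subtype_apply, starGraph_adj, ne_eq,
      Subtype.ext_iff]
    refine ⟨fun h => ⟨h.ne, ?_⟩, ?_⟩
    · exact (hreach x).imp_right fun hcx => hc _ _ hcx h
    · rintro ⟨hxy, rfl | rfl⟩
      · exact (hreach y).resolve_left (Ne.symm hxy)
      · exact ((hreach x).resolve_left hxy).symm
  obtain ⟨j, ⟨φ⟩⟩ :
      ∃ j, Nonempty (compAt F v ≃g completeBipartiteGraph (Fin 1) (Fin j)) :=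
    ⟨_, ⟨hstar ▸ (starGraphIsoCompleteBipartiteGraph _).trans
      (completeBipartiteGraphCongr (Equiv.ofUnique _ _) (Finite.equivFin _))⟩⟩
  have hdeg := ncard_neighborSet_eq_of_iso φ (φ.symm (.inl 0))
  rw [φ.apply_symm_apply] at hdeg
  simp only [Sum.elim_inl, Nat.card_eq_fintype_card, Fintype.card_fin] at hdeg
  exact ⟨j, hdeg ▸ hF.one_le_ncard_neighborSet _, hdeg ▸ hF.ncard_neighborSet_le _,
    ⟨φ⟩⟩

theorem isIndepSet_isoSet (G : SimpleGraph V) (S : Set V) : G.IsIndepSet (isoSet G S) :=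
  fun _ hx _ hy _ hxy => hy.1 (hx.2 _ hxy)

theorem exists_adj_ncard_fiber_le [Finite V] {G : SimpleGraph V} {k : ℕ}
    (hcond : ∀ S : Set V, isoNum G S ≤ k * S.ncard) {I : Set V} (hI : G.IsIndepSet I) :
    ∃ f : V → V, (∀ i ∈ I, G.Adj i (f i)) ∧ ∀ s, {i ∈ I | f i = s}.ncard ≤ k := by
  classical
  have := Fintype.ofFinite V
  -- Hall's theorem, with every vertex of `G` split into `k` copies
  obtain ⟨g, hg_inj, hg⟩ := (Finset.all_card_le_biUnion_card_iff_exists_injective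
    fun i : I => G.neighborFinset i ×ˢ Finset.range k).mp fun X => by
      set N := X.biUnion fun i => G.neighborFinset i
      have hX : Subtype.val '' (X : Set I) ⊆ isoSet G N := by
        rintro _ ⟨i, hiX, rfl⟩
        refine ⟨fun hiN => ?_, fun w hw => ?_⟩
        · obtain ⟨j, hjX, hij⟩ := Finset.mem_biUnion.mp hiN
          rw [mem_neighborFinset] at hij
          exact hI j.2 i.2 hij.ne hij
        · exact Finset.mem_biUnion.mpr ⟨i, hiX, (mem_neighborFinset _ _ _).mpr hw⟩
      calc X.card = (Subtype.val '' (X : Set I)).ncard := by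
            rw [Set.ncard_image_of_injective _ Subtype.val_injective, Set.ncard_coe_finset]
        _ ≤ isoNum G N := Set.ncard_le_ncard hX (Set.toFinite _)
        _ ≤ k * N.card := by simpa using hcond N
        _ = (X.biUnion fun i => G.neighborFinset i ×ˢ Finset.range k).card := by
            rw [show X.biUnion (fun i => G.neighborFinset i ×ˢ Finset.range k) =
                N ×ˢ Finset.range k by ext; simp [N, ← and_assoc, exists_and_right],
              Finset.card_product, Finset.card_range, mul_comm]
  let g' (v : V) : V × ℕ := if h : v ∈ I then g ⟨v, h⟩ else (v, 0)
  have hg' {i : V} (hi : i ∈ I) : g' i = g ⟨i, hi⟩ := dif_pos hi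
  refine ⟨fun v => (g' v).1, fun i hi => ?_, fun s => ?_⟩
  · simpa [hg' hi] using (Finset.mem_product.mp (hg ⟨i, hi⟩)).1
  · calc {i ∈ I | (g' i).1 = s}.ncard
        ≤ (↑(({s} : Finset V) ×ˢ Finset.range k) : Set (V × ℕ)).ncard := by
          refine Set.ncard_le_ncard_of_injOn g' (fun i ⟨hi, his⟩ => ?_) ?_ (Set.toFinite _)
          · rw [Finset.mem_coe, Finset.mem_product, hg' hi]
            exact ⟨Finset.mem_singleton.mpr (hg' hi ▸ his), (Finset.mem_product.mp (hg _)).2⟩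
          · rintro i ⟨hi, -⟩ j ⟨hj, -⟩ hij
            rw [hg' hi, hg' hj] at hij
            exact congrArg Subtype.val (hg_inj hij)
      _ = k := by rw [Set.ncard_coe_finset, Finset.card_product]; simp

theorem isoNum_induce_compl_le [Finite V] {G : SimpleGraph V} {k : ℕ} {S : Set V}
    (hS : S.Nonempty)
    (hmax : ∀ T : Set V, T.Nonempty → isoNum G T + k * S.ncard ≤ isoNum G S + k * T.ncard)
    (T : Set ↥(S ∪ isoSet G S)ᶜ) :
    isoNum (G.induce (S ∪ isoSet G S)ᶜ) T ≤ k * T.ncard := by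
  set T' : Set V := Subtype.val '' T
  have hT'A : T' ⊆ (S ∪ isoSet G S)ᶜ := by rintro _ ⟨x, -, rfl⟩; exact x.2
  have hsub : Subtype.val '' isoSet (G.induce (S ∪ isoSet G S)ᶜ) T ∪ isoSet G S ⊆
      isoSet G (S ∪ T') := by
    rintro _ (⟨x, ⟨hxT, hx⟩, rfl⟩ | ⟨hxS, hx⟩)
    · refine ⟨?_, fun w hw => ?_⟩
      · rintro (hxS | ⟨y, hyT, hyx⟩)
        · exact x.2 (.inl hxS)
        · exact hxT (Subtype.ext hyx ▸ hyT)
      · by_cases hwA : w ∈ (S ∪ isoSet G S)ᶜ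
        · exact .inr ⟨⟨w, hwA⟩, hx ⟨w, hwA⟩ hw, rfl⟩
        · rcases not_not.mp hwA with hwS | hwI
          · exact .inl hwS
          · exact absurd (.inl (hwI.2 _ hw.symm)) x.2
    · refine ⟨?_, fun w hw => .inl (hx w hw)⟩
      rintro (hxS' | hxT')
      · exact hxS hxS'
      · exact hT'A hxT' (.inr ⟨hxS, hx⟩)
  have hdisj : Disjoint (Subtype.val '' isoSet (G.induce (S ∪ isoSet G S)ᶜ) T) (isoSet G S) :=
    Set.disjoint_left.mpr fun _ ⟨x, _, hx⟩ hxI => x.2 (.inr (hx ▸ hxI))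
  have hST' : Disjoint S T' := Set.disjoint_left.mpr fun _ hxS hxT' => hT'A hxT' (.inl hxS)
  have hcount := Set.ncard_le_ncard hsub (Set.toFinite _)
  rw [Set.ncard_union_eq hdisj, Set.ncard_image_of_injective _ Subtype.val_injective] at hcount
  have hmaxT := hmax (S ∪ T') (hS.mono Set.subset_union_left)
  rw [Set.ncard_union_eq hST', Set.ncard_image_of_injective _ Subtype.val_injective] at hmaxT
  simp only [isoNum_eq_ncard_isoSet] at hmaxT ⊢
  linarith

section ExtendByStars

variable {S I : Set V} {f : V → V} {F' : SimpleGraph ↥(S ∪ I)ᶜ}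

/-- When `f` maps `I` into `S`, the added edges `i — f i` form stars centred in `S` whose leaves
are the fibres of `f` on `I`. -/
def extendByStars (f : V → V) (F' : SimpleGraph ↥(S ∪ I)ᶜ) : SimpleGraph V :=
  F'.map (Function.Embedding.subtype _) ⊔ fromRel fun i s => i ∈ I ∧ f i = s

theorem extendByStars_adj (hSI : Disjoint S I) (hfS : ∀ i ∈ I, f i ∈ S) {x y : V} :
    (extendByStars f F').Adj x y ↔
      (∃ a b : ↥(S ∪ I)ᶜ, F'.Adj a b ∧ ↑a = x ∧ ↑b = y) ∨
      (x ∈ I ∧ f x = y) ∨ (y ∈ I ∧ f y = x) := by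
  have hfI {i : V} (hi : i ∈ I) : f i ∉ I := hSI.notMem_of_mem_left (hfS i hi)
  have hne : (x ∈ I ∧ f x = y) ∨ (y ∈ I ∧ f y = x) → x ≠ y := by
    rintro (⟨hx, rfl⟩ | ⟨hy, rfl⟩) h
    · exact hfI hx (h ▸ hx)
    · exact hfI hy (by rwa [h])
  rw [extendByStars, sup_adj, map_adj, fromRel_adj, and_iff_right_of_imp hne]
  rfl

theorem neighborSet_extendByStars_coe (hSI : Disjoint S I) (hfS : ∀ i ∈ I, f i ∈ S)
    (a : ↥(S ∪ I)ᶜ) :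
    (extendByStars f F').neighborSet a = Subtype.val '' F'.neighborSet a := by
  ext w
  rw [mem_neighborSet, extendByStars_adj hSI hfS]
  constructor
  · rintro (⟨a', b, hab, ha', rfl⟩ | ⟨haI, -⟩ | ⟨hw, hwa⟩)
    · exact ⟨b, Subtype.ext ha' ▸ hab, rfl⟩
    · exact absurd (.inr haI) a.2
    · exact absurd (.inl (hwa ▸ hfS w hw)) a.2
  · rintro ⟨b, hab, rfl⟩
    exact .inl ⟨a, b, hab, rfl, rfl⟩

theorem neighborSet_extendByStars_of_mem_right (hSI : Disjoint S I) (hfS : ∀ i ∈ I, f i ∈ S)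
    {i : V} (hi : i ∈ I) : (extendByStars f F').neighborSet i = {f i} := by
  ext w
  rw [mem_neighborSet, extendByStars_adj hSI hfS, Set.mem_singleton_iff]
  refine ⟨?_, fun h => .inr (.inl ⟨hi, h.symm⟩)⟩
  rintro (⟨a, _, -, rfl, -⟩ | ⟨-, rfl⟩ | ⟨hw, rfl⟩)
  · exact absurd (.inr hi) a.2
  · rfl
  · exact absurd hi (hSI.notMem_of_mem_left (hfS w hw))

theorem neighborSet_extendByStars_of_mem_left (hSI : Disjoint S I) (hfS : ∀ i ∈ I, f i ∈ S)
    {s : V} (hs : s ∈ S) : (extendByStars f F').neighborSet s = {i ∈ I | f i = s} := by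
  ext w
  rw [mem_neighborSet, extendByStars_adj hSI hfS]
  refine ⟨?_, .inr ∘ .inr⟩
  rintro (⟨a, _, -, rfl, -⟩ | ⟨hsI, -⟩ | h)
  · exact absurd (.inl hs) a.2
  · exact absurd hsI (hSI.notMem_of_mem_left hs)
  · exact h

theorem extendByStars_le {G : SimpleGraph V} (hf : ∀ i ∈ I, G.Adj i (f i))
    (hF'G : F' ≤ G.induce (S ∪ I)ᶜ) : extendByStars f F' ≤ G := by
  refine sup_le ?_ ?_
  · rintro _ _ ⟨-, a, b, hab, rfl, rfl⟩
    exact hF'G hab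
  · rintro x y ⟨-, ⟨hx, rfl⟩ | ⟨hy, rfl⟩⟩
    · exact hf x hx
    · exact (hf y hy).symm

theorem isStarFactor_extendByStars {k : ℕ} (hSI : Disjoint S I) (hfS : ∀ i ∈ I, f i ∈ S)
    (hfib : ∀ s ∈ S, 1 ≤ {i ∈ I | f i = s}.ncard ∧ {i ∈ I | f i = s}.ncard ≤ k)
    (hF' : IsStarFactor k F') : IsStarFactor k (extendByStars f F') := by
  have hdeg_coe (a : ↥(S ∪ I)ᶜ) :
      ((extendByStars f F').neighborSet a).ncard = (F'.neighborSet a).ncard := by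
    rw [neighborSet_extendByStars_coe hSI hfS, Set.ncard_image_of_injective _ Subtype.val_injective]
  have hdeg_right {i : V} (hi : i ∈ I) : ((extendByStars f F').neighborSet i).ncard = 1 := by
    rw [neighborSet_extendByStars_of_mem_right hSI hfS hi, Set.ncard_singleton]
  have hdeg (v : V) : 1 ≤ ((extendByStars f F').neighborSet v).ncard ∧
      ((extendByStars f F').neighborSet v).ncard ≤ k := by
    by_cases hvS : v ∈ S
    · rw [neighborSet_extendByStars_of_mem_left hSI hfS hvS]
      exact hfib v hvS
    by_cases hvI : v ∈ I
    · rw [hdeg_right hvI]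
      exact ⟨le_rfl, (hfib _ (hfS v hvI)).1.trans (hfib _ (hfS v hvI)).2⟩
    rw [hdeg_coe ⟨v, by simp [hvS, hvI]⟩]
    exact ⟨hF'.one_le_ncard_neighborSet _, hF'.ncard_neighborSet_le _⟩
  refine ⟨fun v => (hdeg v).1, fun v => (hdeg v).2, fun {x y} hxy => ?_⟩
  rcases (extendByStars_adj hSI hfS).mp hxy with
    ⟨a, b, hab, rfl, rfl⟩ | ⟨hx, -⟩ | ⟨hy, -⟩
  · rw [hdeg_coe, hdeg_coe]
    exact hF'.ncard_neighborSet_eq_one_of_adj hab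
  · exact .inl (hdeg_right hx)
  · exact .inr (hdeg_right hy)

end ExtendByStars

theorem exists_isStarFactor_of_induce_isoSet_compl [Finite V] {G : SimpleGraph V} {k : ℕ}
    (hcond : ∀ S : Set V, isoNum G S ≤ k * S.ncard) {S : Set V}
    (hS : k * S.ncard < isoNum G S + k) {F' : SimpleGraph ↥(S ∪ isoSet G S)ᶜ}
    (hF'G : F' ≤ G.induce (S ∪ isoSet G S)ᶜ) (hF' : IsStarFactor k F') :
    ∃ F ≤ G, IsStarFactor k F := by
  obtain ⟨f, hfadj, hfib⟩ := exists_adj_ncard_fiber_le hcond (isIndepSet_isoSet G S)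
  have hfS : ∀ i ∈ isoSet G S, f i ∈ S := fun i hi => hi.2 _ (hfadj i hi)
  have hSI : Disjoint S (isoSet G S) := Set.disjoint_right.mpr fun _ hi => hi.1
  -- an empty fibre over `s` would squeeze `isoSet G S` into `S \ {s}`, contradicting `hS`
  have hfib_pos (s : V) (hs : s ∈ S) : 1 ≤ {i ∈ isoSet G S | f i = s}.ncard := by
    by_contra! h
    have hempty := (Set.ncard_eq_zero (Set.toFinite _)).mp (Nat.lt_one_iff.mp h)
    have hmaps : Set.MapsTo f (isoSet G S) (S \ {s}) := fun i hi =>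
      ⟨hfS i hi, fun his => hempty.subset ⟨hi, his⟩⟩
    have hle := Set.ncard_le_mul_ncard_of_mapsTo (Set.toFinite _) (Set.toFinite _) hmaps
      fun b _ => hfib b
    rw [Set.ncard_sdiff_singleton_of_mem hs, Nat.mul_sub_one, ← isoNum_eq_ncard_isoSet] at hle
    have : k ≤ k * S.ncard :=
      Nat.le_mul_of_pos_right k ((Set.ncard_pos (Set.toFinite _)).mpr ⟨s, hs⟩)
    omega
  exact ⟨_, extendByStars_le hfadj hF'G,
    isStarFactor_extendByStars hSI hfS (fun s hs => ⟨hfib_pos s hs, hfib s⟩) hF'⟩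

theorem isoNum_eq_zero_iff [Finite V] {G : SimpleGraph V} {S : Set V} :
    isoNum G S = 0 ↔ ∀ v ∉ S, ∃ w, G.Adj v w ∧ w ∉ S := by
  rw [isoNum_eq_ncard_isoSet, Set.ncard_eq_zero, Set.eq_empty_iff_forall_notMem]
  simp [isoSet]

theorem isoNum_deleteEdges_le_add_two [Finite V] (G : SimpleGraph V) (e : Sym2 V) (S : Set V) :
    isoNum (G.deleteEdges {e}) S ≤ isoNum G S + 2 := by
  have hsub : isoSet (G.deleteEdges {e}) S ⊆ isoSet G S ∪ {v | v ∈ e} := by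
    rintro v ⟨hvS, hv⟩
    by_cases hve : v ∈ e
    · exact .inr hve
    · refine .inl ⟨hvS, fun w hw => hv w (deleteEdges_adj.mpr ⟨hw, ?_⟩)⟩
      rintro rfl
      exact hve (Sym2.mem_mk_left v w)
  have hcard : {v | v ∈ e}.ncard ≤ 2 := by
    induction e using Sym2.ind with
    | _ a b =>
      rw [show {v | v ∈ s(a, b)} = {a, b} by ext; simp]
      exact (Set.ncard_insert_le a {b}).trans (by rw [Set.ncard_singleton])
  simp only [isoNum_eq_ncard_isoSet]
  calc (isoSet (G.deleteEdges {e}) S).ncard ≤ (isoSet G S ∪ {v | v ∈ e}).ncard :=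
        Set.ncard_le_ncard hsub (Set.toFinite _)
    _ ≤ (isoSet G S).ncard + {v | v ∈ e}.ncard := Set.ncard_union_le _ _
    _ ≤ (isoSet G S).ncard + 2 := Nat.add_le_add_left hcard _

theorem isoNum_deleteEdges_empty [Finite V] {G : SimpleGraph V} (h0 : isoNum G ∅ = 0)
    (h1 : ∀ w, isoNum G {w} = 0) (e : Sym2 V) : isoNum (G.deleteEdges {e}) ∅ = 0 := by
  rw [isoNum_eq_zero_iff] at h0 ⊢
  intro v _
  obtain ⟨w, hvw, -⟩ := h0 v (Set.notMem_empty v)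
  obtain ⟨z, hvz, hzw⟩ := isoNum_eq_zero_iff.mp (h1 w) v hvw.ne
  -- `v` has two distinct neighbours, so one of its edges survives
  by_cases hew : s(v, w) = e
  · refine ⟨z, deleteEdges_adj.mpr ⟨hvz, fun h => hzw ?_⟩, Set.notMem_empty z⟩
    rw [Set.mem_singleton_iff, ← hew] at h
    exact Sym2.congr_right.mp h
  · exact ⟨w, deleteEdges_adj.mpr ⟨hvw, hew⟩, Set.notMem_empty w⟩

theorem isoNum_deleteEdges_le [Finite V] {G : SimpleGraph V} {k : ℕ} (hk : 2 ≤ k)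
    (hcond : ∀ S : Set V, isoNum G S ≤ k * S.ncard)
    (hslack : ∀ S : Set V, S.Nonempty → isoNum G S + k ≤ k * S.ncard) (e : Sym2 V)
    (S : Set V) : isoNum (G.deleteEdges {e}) S ≤ k * S.ncard := by
  rcases S.eq_empty_or_nonempty with rfl | hS
  · refine (isoNum_deleteEdges_empty (by simpa using hcond ∅) (fun w => ?_) e).trans_le
      (Nat.zero_le _)
    simpa using hslack {w} (Set.singleton_nonempty w)
  · have := isoNum_deleteEdges_le_add_two G e S
    have := hslack S hS
    omega

theorem ncard_edgeSet_induce_le [Finite V] (G : SimpleGraph V) (A : Set V) :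
    (G.induce A).edgeSet.ncard ≤ G.edgeSet.ncard := by
  refine Set.ncard_le_ncard_of_injOn (Sym2.map Subtype.val) (fun e he => ?_)
    (Sym2.map.injective Subtype.val_injective).injOn (Set.toFinite _)
  induction e using Sym2.ind with
  | _ a b => exact he

theorem exists_isStarFactor_of_isoNum_le [Finite V] {G : SimpleGraph V} {k : ℕ} (hk : 2 ≤ k)
    (hcond : ∀ S : Set V, isoNum G S ≤ k * S.ncard) : ∃ F ≤ G, IsStarFactor k F := by
  induction h : Nat.card V + G.edgeSet.ncard using Nat.strong_induction_on generalizing V with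
  | _ n ih =>
  rcases isEmpty_or_nonempty V with hV | ⟨⟨v⟩⟩
  · exact ⟨⊥, bot_le, isEmptyElim, isEmptyElim, fun {x} => isEmptyElim x⟩
  by_cases hA : ∃ S : Set V, S.Nonempty ∧ k * S.ncard < isoNum G S + k
  · obtain ⟨S₀, hS₀, hlt⟩ := hA
    obtain ⟨S, hS, hmax⟩ := Set.exists_max_image {S : Set V | S.Nonempty}
      (fun S => (isoNum G S : ℤ) - k * S.ncard) (Set.toFinite _) ⟨S₀, hS₀⟩
    have hsmaller : Nat.card ↥(S ∪ isoSet G S)ᶜ < Nat.card V := by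
      rw [Nat.card_coe_set_eq]
      refine Set.ncard_lt_card fun h => ?_
      obtain ⟨s, hs⟩ := hS
      exact (Set.eq_univ_iff_forall.mp h s) (.inl hs)
    have hcond' := isoNum_induce_compl_le (G := G) (k := k) hS fun T hT => by
      have := hmax T hT; omega
    have hlt :
        Nat.card ↥(S ∪ isoSet G S)ᶜ + (G.induce (S ∪ isoSet G S)ᶜ).edgeSet.ncard < n := by
      have := ncard_edgeSet_induce_le G (S ∪ isoSet G S)ᶜ
      omega
    obtain ⟨F', hF'G, hF'⟩ := ih _ hlt hcond' rfl
    exact exists_isStarFactor_of_induce_isoSet_compl hcond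
      (by have := hmax S₀ hS₀; omega) hF'G hF'
  · push Not at hA
    obtain ⟨w, hvw, -⟩ :=
      isoNum_eq_zero_iff.mp (by simpa using hcond ∅) v (Set.notMem_empty v)
    have hfewer : (G.deleteEdges {s(v, w)}).edgeSet.ncard < G.edgeSet.ncard := by
      rw [edgeSet_deleteEdges]
      exact Set.ncard_sdiff_singleton_lt_of_mem hvw
    have hcond' := isoNum_deleteEdges_le hk hcond (fun S hS => by have := hA S hS; omega) s(v, w)
    have hlt : Nat.card V + (G.deleteEdges {s(v, w)}).edgeSet.ncard < n := by omega
    obtain ⟨F, hFG, hF⟩ := ih _ hlt hcond' rfl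
    exact ⟨F, hFG.trans (deleteEdges_le _), hF⟩

end SimpleGraph

/-- Amahashi–Kano: for `k ≥ 2`, `G` has a `{K_{1,1}, …, K_{1,k}}`-factor iff
`iso(G-S) ≤ k|S|` for all `S ⊆ V(G)`. -/
theorem stmt4 {V : Type*} [Fintype V] (G : SimpleGraph V) (k : ℕ) (hk : 2 ≤ k) :
    (∃ F : SimpleGraph V, F ≤ G ∧ ∀ v : V, ∃ j : ℕ, 1 ≤ j ∧ j ≤ k ∧
        Nonempty (compAt F v ≃g completeBipartiteGraph (Fin 1) (Fin j))) ↔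
      ∀ S : Set V, isoNum G S ≤ k * S.ncard := by
  constructor
  · rintro ⟨F, hFG, hstar⟩
    have hdeg (v : V) : 1 ≤ (F.neighborSet v).ncard ∧ (F.neighborSet v).ncard ≤ k := by
      obtain ⟨j, hj, hjk, ⟨φ⟩⟩ := hstar v
      have := ncard_neighborSet_mem_Icc_of_iso hj φ
      omega
    exact isoNum_le_mul_ncard_of_le hFG (fun v => (hdeg v).1) (fun v => (hdeg v).2)
  · intro hcond
    obtain ⟨F, hFG, hF⟩ := exists_isStarFactor_of_isoNum_le hk hcond
    exact ⟨F, hFG, hF.exists_iso_compAt⟩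
end

section
/- Every tree T in the family 𝒯(3) has a fractional [1, 3/2]-factor taking values in {1/2, 1}, where every pendant edge receives value 1 and every other edge receives value 1/2. -/
open SimpleGraph

/-- Degree of a vertex, as the `ncard` of its neighbor set. -/
noncomputable def ndeg {V : Type*} (G : SimpleGraph V) (v : V) : ℕ :=
  (G.neighborSet v).ncard

/-- Vertex set of the tree `T_R` obtained from a `{1,3}`-tree `R`: the vertices of `R`,
one subdivision vertex for each edge of `R`, and one new pendant vertex for each leaf of `R`. -/
def T3Vert {V : Type*} (R : SimpleGraph V) : Type _ :=
  V ⊕ (↥R.edgeSet ⊕ {v : V // ndeg R v = 1})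

/-- The tree `T_R` obtained from `R` by subdividing every edge once and attaching a new
pendant edge (with a new endpoint) at every leaf of `R`. -/
def T3 {V : Type*} (R : SimpleGraph V) : SimpleGraph (T3Vert R) :=
  SimpleGraph.fromRel (fun a b =>
    match a, b with
    | Sum.inl v, Sum.inr (Sum.inl e) => v ∈ (e : Sym2 V)
    | Sum.inl v, Sum.inr (Sum.inr w) => v = (w : V)
    | _, _ => False)

/-! Put weight `1` on pendant edges and `1/2` on all other edges. When every vertex of `R` has
degree `1` or `3`, the leaves of `T_R` are exactly the new pendant vertices. Hence a new pendant
vertex has weighted degree `1`, a subdivision vertex `1/2 + 1/2 = 1`, and an original vertex of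
degree `d` has `d/2`, plus `1` if `d = 1`: this is `3/2` for both `d = 1` and `d = 3`. -/

attribute [reducible] T3Vert

theorem finsum_mem_const_of_finite {α M : Type*} [AddCommMonoid M] {s : Set α} (hs : s.Finite)
    (c : M) : ∑ᶠ _ ∈ s, c = s.ncard • c := by
  rw [finsum_mem_eq_finite_toFinset_sum _ hs, Finset.sum_const, Set.ncard_eq_toFinset_card s hs]

theorem Subtype.ncard_setOf_val_eq {α : Type*} (p : α → Prop) [DecidablePred p] (a : α) :
    {x : Subtype p | (x : α) = a}.ncard = if p a then 1 else 0 := by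
  split_ifs with ha
  · rw [show {x : Subtype p | (x : α) = a} = {⟨a, ha⟩} by ext x; simp [Subtype.ext_iff],
      Set.ncard_singleton]
  · rw [show {x : Subtype p | (x : α) = a} = ∅ from
      Set.eq_empty_of_forall_notMem fun x hx => ha (hx ▸ x.2), Set.ncard_empty]

namespace SimpleGraph

variable {V : Type*} {G : SimpleGraph V}

theorem incidenceSet_eq_image_neighborSet (v : V) :
    G.incidenceSet v = (fun w => s(v, w)) '' G.neighborSet v := by
  ext e
  constructor
  · rintro ⟨he, hv⟩
    obtain ⟨w, rfl⟩ := Sym2.mem_iff_exists.mp hv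
    exact ⟨w, he, rfl⟩
  · rintro ⟨w, hw, rfl⟩
    exact G.mk'_mem_incidenceSet_left_iff.mpr hw

theorem ncard_setOf_incident_eq_ndeg (v : V) :
    {e : G.edgeSet | v ∈ (e : Sym2 V)}.ncard = ndeg G v := by
  have himage : Subtype.val '' {e : G.edgeSet | v ∈ (e : Sym2 V)} = G.incidenceSet v := by
    ext e
    exact ⟨fun ⟨e', he', he⟩ => he ▸ ⟨e'.2, he'⟩, fun he => ⟨⟨e, he.1⟩, he.2, rfl⟩⟩
  rw [← Set.ncard_image_of_injective _ Subtype.val_injective, himage,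
    incidenceSet_eq_image_neighborSet,
    Set.ncard_image_of_injective _ fun _ _ => Sym2.congr_right.mp, ndeg]

theorem ncard_setOf_mem_eq_two_of_mem_edgeSet {e : Sym2 V} (he : e ∈ G.edgeSet) :
    {v | v ∈ e}.ncard = 2 := by
  induction e using Sym2.ind with | _ a b => ?_
  convert Set.ncard_pair (G.mem_edgeSet.mp he).ne
  ext
  simp

theorem hdeg_eq_finsum_neighborSet (h : Sym2 V → ℚ) (v : V) :
    hdeg G h v = ∑ᶠ w ∈ G.neighborSet v, h s(v, w) := by
  rw [hdeg, incidenceSet_eq_image_neighborSet,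
    finsum_mem_image fun _ _ _ _ => Sym2.congr_right.mp]

theorem hdeg_eq_ndeg_mul {h : Sym2 V → ℚ} {v : V} (hfin : (G.neighborSet v).Finite) {c : ℚ}
    (hc : ∀ w, G.Adj v w → h s(v, w) = c) : hdeg G h v = ndeg G v * c := by
  rw [hdeg_eq_finsum_neighborSet, finsum_mem_congr rfl fun w (hw : w ∈ G.neighborSet v) => hc w hw,
    finsum_mem_const_of_finite hfin, nsmul_eq_mul, ndeg]

variable (G) in
open Classical in
noncomputable def pendantWeight (e : Sym2 V) : ℚ :=
  if e ∈ G.edgeSet then if ∃ v ∈ e, ndeg G v = 1 then 1 else 1/2 else 0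

theorem mem_edgeSet_of_pendantWeight_ne_zero {e : Sym2 V} (he : G.pendantWeight e ≠ 0) :
    e ∈ G.edgeSet := by
  by_contra h
  exact he (if_neg h)

theorem pendantWeight_mem_Icc (e : Sym2 V) : G.pendantWeight e ∈ Set.Icc 0 1 := by
  unfold pendantWeight
  split_ifs <;> norm_num

theorem pendantWeight_of_pendant {e : Sym2 V} (he : e ∈ G.edgeSet)
    (hpend : ∃ v ∈ e, ndeg G v = 1) : G.pendantWeight e = 1 := by
  rw [pendantWeight, if_pos he, if_pos hpend]

theorem pendantWeight_of_not_pendant {e : Sym2 V} (he : e ∈ G.edgeSet)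
    (hpend : ¬ ∃ v ∈ e, ndeg G v = 1) : G.pendantWeight e = 1/2 := by
  rw [pendantWeight, if_pos he, if_neg hpend]

theorem pendantWeight_mk_of_adj {v w : V} (hvw : G.Adj v w) :
    G.pendantWeight s(v, w) = if ndeg G v = 1 ∨ ndeg G w = 1 then 1 else 1/2 := by
  simp only [pendantWeight, mem_edgeSet, hvw, if_true, Sym2.mem_iff, exists_eq_or_imp,
    exists_eq_left]

end SimpleGraph

namespace T3

open Sum

variable {V : Type*} {R : SimpleGraph V}

@[simp]
theorem adj_inl_inl (u v : V) : ¬ (T3 R).Adj (inl u) (inl v) :=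
  fun h => h.2.elim id id

@[simp]
theorem adj_inr_inr (x y : ↥R.edgeSet ⊕ {v : V // ndeg R v = 1}) :
    ¬ (T3 R).Adj (inr x) (inr y) := by
  rcases x with _ | _ <;> rcases y with _ | _ <;> exact fun h => h.2.elim id id

@[simp]
theorem adj_inl_inr_inl (v : V) (f : R.edgeSet) :
    (T3 R).Adj (inl v) (inr (inl f)) ↔ v ∈ (f : Sym2 V) :=
  ⟨fun h => h.2.resolve_right id, fun h => ⟨inl_ne_inr, Or.inl h⟩⟩

@[simp]
theorem adj_inl_inr_inr (v : V) (w : {v : V // ndeg R v = 1}) :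
    (T3 R).Adj (inl v) (inr (inr w)) ↔ v = w :=
  ⟨fun h => h.2.resolve_right id, fun h => ⟨inl_ne_inr, Or.inl h⟩⟩

theorem neighborSet_inr_inr (w : {v : V // ndeg R v = 1}) :
    (T3 R).neighborSet (inr (inr w)) = {inl (w : V)} := by
  ext (v | x) <;> simp [adj_comm, eq_comm]

theorem neighborSet_inr_inl (f : R.edgeSet) :
    (T3 R).neighborSet (inr (inl f)) = inl '' {v | v ∈ (f : Sym2 V)} := by
  ext (v | x) <;> simp [adj_comm]

theorem neighborSet_inl (u : V) :
    (T3 R).neighborSet (inl u) =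
      (inr ∘ inl) '' {f : R.edgeSet | u ∈ (f : Sym2 V)} ∪
        (inr ∘ inr) '' {w : {v : V // ndeg R v = 1} | (w : V) = u} := by
  ext (v | f | w) <;> simp [eq_comm]

theorem disjoint_image_inr_inl_image_inr_inr (s : Set R.edgeSet)
    (t : Set {v : V // ndeg R v = 1}) :
    Disjoint ((inr ∘ inl) '' s : Set (T3Vert R)) ((inr ∘ inr) '' t) :=
  Set.disjoint_image_image fun _ _ _ _ => by simp

theorem ndeg_inr_inr (w : {v : V // ndeg R v = 1}) : ndeg (T3 R) (inr (inr w)) = 1 := by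
  rw [ndeg, neighborSet_inr_inr, Set.ncard_singleton]

theorem ndeg_inr_inl (f : R.edgeSet) : ndeg (T3 R) (inr (inl f)) = 2 := by
  rw [ndeg, neighborSet_inr_inl, Set.ncard_image_of_injective _ inl_injective,
    SimpleGraph.ncard_setOf_mem_eq_two_of_mem_edgeSet f.2]

variable [Finite V]

theorem ndeg_inl (u : V) :
    ndeg (T3 R) (inl u) = ndeg R u + if ndeg R u = 1 then 1 else 0 := by
  rw [ndeg, neighborSet_inl, Set.ncard_union_eq (disjoint_image_inr_inl_image_inr_inr _ _),
    Set.ncard_image_of_injective _ (inr_injective.comp inl_injective),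
    Set.ncard_image_of_injective _ (inr_injective.comp inr_injective),
    R.ncard_setOf_incident_eq_ndeg, Subtype.ncard_setOf_val_eq]

theorem ndeg_inl_ne_one {u : V} {f : R.edgeSet} (hu : u ∈ (f : Sym2 V)) :
    ndeg (T3 R) (inl u) ≠ 1 := by
  have hR : ndeg R u ≠ 0 := R.ncard_setOf_incident_eq_ndeg u ▸ Set.ncard_ne_zero_of_mem hu
  rw [ndeg_inl]
  split_ifs <;> omega

theorem hdeg_pendantWeight_inr_inr (w : {v : V // ndeg R v = 1}) :
    hdeg (T3 R) (T3 R).pendantWeight (inr (inr w)) = 1 := by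
  rw [hdeg_eq_ndeg_mul (Set.toFinite _) fun v hv => ?_, ndeg_inr_inr, Nat.cast_one, one_mul]
  rw [pendantWeight_mk_of_adj hv, if_pos (Or.inl (ndeg_inr_inr w))]

theorem hdeg_pendantWeight_inr_inl (f : R.edgeSet) :
    hdeg (T3 R) (T3 R).pendantWeight (inr (inl f)) = 1 := by
  rw [hdeg_eq_ndeg_mul (c := 1/2) (Set.toFinite _) fun v hv => ?_, ndeg_inr_inl]
  · norm_num
  rcases v with v | x
  · rw [pendantWeight_mk_of_adj hv, if_neg]
    rintro (h | h)
    · simp [ndeg_inr_inl] at h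
    · exact ndeg_inl_ne_one ((adj_inl_inr_inl v f).mp hv.symm) h
  · exact absurd hv (adj_inr_inr _ _)

theorem hdeg_pendantWeight_inl (u : V) :
    hdeg (T3 R) (T3 R).pendantWeight (inl u) =
      ndeg R u / 2 + if ndeg R u = 1 then 1 else 0 := by
  have hsub : ∀ x ∈ (inr ∘ inl) '' {f : R.edgeSet | u ∈ (f : Sym2 V)},
      (T3 R).pendantWeight s(inl u, x) = 1/2 := by
    rintro _ ⟨f, hf, rfl⟩
    rw [Function.comp_apply, pendantWeight_mk_of_adj ((adj_inl_inr_inl u f).mpr hf), if_neg]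
    rintro (h | h)
    · exact ndeg_inl_ne_one hf h
    · simp [ndeg_inr_inl] at h
  have hpend : ∀ x ∈ (inr ∘ inr) '' {w : {v : V // ndeg R v = 1} | (w : V) = u},
      (T3 R).pendantWeight s(inl u, x) = 1 := by
    rintro _ ⟨w, rfl, rfl⟩
    rw [Function.comp_apply, pendantWeight_mk_of_adj ((adj_inl_inr_inr _ w).mpr rfl),
      if_pos (Or.inr (ndeg_inr_inr w))]
  rw [hdeg_eq_finsum_neighborSet, neighborSet_inl,
    finsum_mem_union (disjoint_image_inr_inl_image_inr_inr _ _) (Set.toFinite _)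
      (Set.toFinite _),
    finsum_mem_congr rfl hsub, finsum_mem_congr rfl hpend,
    finsum_mem_const_of_finite (Set.toFinite _), finsum_mem_const_of_finite (Set.toFinite _),
    Set.ncard_image_of_injective _ (inr_injective.comp inl_injective),
    Set.ncard_image_of_injective _ (inr_injective.comp inr_injective),
    R.ncard_setOf_incident_eq_ndeg, Subtype.ncard_setOf_val_eq]
  split_ifs <;> simp [div_eq_mul_inv]

end T3

theorem stmt13_general (m : ℕ) (R : SimpleGraph (Fin m))
    (hdegR : ∀ v, ndeg R v = 1 ∨ ndeg R v = 3) :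
    ∃ h : Sym2 (T3Vert R) → ℚ, IsFracFactor (T3 R) 1 (3/2) h ∧
      ∀ e ∈ (T3 R).edgeSet,
        ((∃ v ∈ e, ndeg (T3 R) v = 1) → h e = 1) ∧
        ((¬ ∃ v ∈ e, ndeg (T3 R) v = 1) → h e = 1/2) := by
  refine ⟨(T3 R).pendantWeight, ⟨fun _ => mem_edgeSet_of_pendantWeight_ne_zero,
    pendantWeight_mem_Icc, ?_⟩, fun _ he => ⟨pendantWeight_of_pendant he,
    pendantWeight_of_not_pendant he⟩⟩
  rintro (u | f | w)
  · rw [T3.hdeg_pendantWeight_inl]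
    rcases hdegR u with hu | hu <;> rw [hu] <;> norm_num
  · rw [T3.hdeg_pendantWeight_inr_inl]; norm_num
  · rw [T3.hdeg_pendantWeight_inr_inr]; norm_num

/-- Every tree `T_R ∈ 𝒯(3)` has a fractional `[1, 3/2]`-factor with values in `{1/2, 1}`:
every pendant edge gets value `1` and every other edge gets value `1/2`. -/
theorem stmt13 (m : ℕ) (R : SimpleGraph (Fin m)) (hR : R.IsTree)
    (hdegR : ∀ v, ndeg R v = 1 ∨ ndeg R v = 3) :
    ∃ h : Sym2 (T3Vert R) → ℚ, IsFracFactor (T3 R) 1 (3/2) h ∧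
      ∀ e ∈ (T3 R).edgeSet,
        ((∃ v ∈ e, ndeg (T3 R) v = 1) → h e = 1) ∧
        ((¬ ∃ v ∈ e, ndeg (T3 R) v = 1) → h e = 1/2) :=
  stmt13_general m R hdegR
end

section
/- Every tree T in the family 𝒯(3) satisfies iso(T−S) ≤ (3/2)|S| for all S ⊆ V(T). -/
open SimpleGraph

/-! Discharging. Every isolated vertex `v` of `T - S` sends weight `1 / deg v` to each of its
neighbours, all of which lie in `S`, so `iso(T - S)` is the total weight received by `S`. A vertex
`s` receives at most `∑_{u ∼ s} 1 / deg u`, and in `T_R` this is at most `3/2`: a vertex of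
degree 3 in `R` has three subdivision neighbours (degree 2 each), a leaf of `R` has one subdivision
neighbour and its pendant neighbour (`1/2 + 1`), a subdivision vertex has two neighbours of degree
at least 2, and a pendant vertex has a single neighbour. -/

open Finset

theorem isoNum_le_mul_ncard_of_sum_inv_degree_le {V : Type*} [Fintype V] (G : SimpleGraph V)
    [DecidableRel G.Adj] {c : ℚ} (hdeg : ∀ v, G.degree v ≠ 0)
    (hc : ∀ s, ∑ u ∈ G.neighborFinset s, (G.degree u : ℚ)⁻¹ ≤ c) (S : Set V) :
    (isoNum G S : ℚ) ≤ c * S.ncard := by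
  classical
  set I := {v | v ∉ S ∧ ∀ w, G.Adj v w → w ∈ S}.toFinset
  have hnbr : ∀ v ∈ I, G.neighborFinset v = S.toFinset.filter (G.Adj v) := by
    intro v hv
    ext w
    simp only [I, Set.mem_toFinset, Set.mem_ofPred_eq] at hv
    simp only [mem_neighborFinset, mem_filter, Set.mem_toFinset]
    exact ⟨fun h => ⟨hv.2 w h, h⟩, And.right⟩
  calc (isoNum G S : ℚ) = ∑ v ∈ I, ∑ _u ∈ G.neighborFinset v, (G.degree v : ℚ)⁻¹ := by
        rw [isoNum, Set.ncard_eq_toFinset_card', card_eq_sum_ones, Nat.cast_sum]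
        refine sum_congr rfl fun v _ => ?_
        rw [sum_const, card_neighborFinset_eq_degree, nsmul_eq_mul,
          mul_inv_cancel₀ (by exact_mod_cast hdeg v), Nat.cast_one]
    _ = ∑ s ∈ S.toFinset, ∑ v ∈ I.filter (G.Adj s), (G.degree v : ℚ)⁻¹ := by
        rw [sum_congr rfl fun v hv => by rw [hnbr v hv]]
        refine sum_comm' fun v s => ?_
        simp only [mem_filter, G.adj_comm v s]
        tauto
    _ ≤ ∑ s ∈ S.toFinset, ∑ v ∈ G.neighborFinset s, (G.degree v : ℚ)⁻¹ := by
        gcongr with s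
        intro v
        simp
    _ ≤ ∑ _s ∈ S.toFinset, c := sum_le_sum fun s _ => hc s
    _ = c * S.ncard := by
        rw [sum_const, nsmul_eq_mul, Set.ncard_eq_toFinset_card', mul_comm]

theorem sum_subtype_ite_eq_coe {V M : Type*} [AddCommMonoid M] [DecidableEq V] {p : V → Prop}
    [DecidablePred p] [Fintype {v // p v}] (a : V) (c : M) :
    ∑ w : {v // p v}, (if a = w then c else 0) = if p a then c else 0 := by
  split_ifs with ha
  · rw [Fintype.sum_eq_single ⟨a, ha⟩ fun w hw => if_neg fun h => hw (Subtype.ext h.symm)]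
    simp
  · exact sum_eq_zero fun w _ => if_neg fun h : a = w => ha (h ▸ w.2)

theorem card_filter_mem_edgeSet {V : Type*} {R : SimpleGraph V} [Fintype R.edgeSet]
    [DecidableEq V] (a : V) : #{e : R.edgeSet | a ∈ (e : Sym2 V)} = ndeg R a := by
  rw [ndeg, ← Nat.card_coe_set_eq, ← Fintype.card_subtype, ← Nat.card_eq_fintype_card]
  exact Nat.card_congr ((Equiv.subtypeSubtypeEquivSubtypeInter _ _).trans
    (R.incidenceSetEquivNeighborSet a))

namespace T3Vert
variable {V : Type*} {R : SimpleGraph V}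

-- Typed at `T3Vert R` rather than at the underlying sum type, so that instance search for
-- `T3 R` (decidable adjacency, finite neighbour sets) applies to these vertices.
def ofVertex (v : V) : T3Vert R := Sum.inl v
def ofEdge (e : R.edgeSet) : T3Vert R := Sum.inr (Sum.inl e)
def ofLeaf (w : {v : V // ndeg R v = 1}) : T3Vert R := Sum.inr (Sum.inr w)

variable [Fintype V] [Fintype R.edgeSet] [Fintype {v : V // ndeg R v = 1}]

instance : Fintype (T3Vert R) :=
  inferInstanceAs (Fintype (V ⊕ (R.edgeSet ⊕ {v : V // ndeg R v = 1})))

theorem sum_eq {M : Type*} [AddCommMonoid M] (f : T3Vert R → M) :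
    ∑ x, f x = ∑ v, f (ofVertex v) + (∑ e, f (ofEdge e) + ∑ w, f (ofLeaf w)) :=
  (Fintype.sum_sum_type f).trans (congrArg _ (Fintype.sum_sum_type _))

end T3Vert

open T3Vert

section T3
variable {V : Type*} {R : SimpleGraph V}

@[simp] theorem T3_adj_ofVertex_ofVertex (v w : V) :
    ¬ (T3 R).Adj (ofVertex v) (ofVertex w) := fun h => h.2.elim id id

@[simp] theorem T3_adj_ofEdge_ofEdge (e f : R.edgeSet) :
    ¬ (T3 R).Adj (ofEdge e) (ofEdge f) := fun h => h.2.elim id id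

@[simp] theorem T3_adj_ofEdge_ofLeaf (e : R.edgeSet) (w : {v : V // ndeg R v = 1}) :
    ¬ (T3 R).Adj (ofEdge e) (ofLeaf w) := fun h => h.2.elim id id

@[simp] theorem T3_adj_ofLeaf_ofEdge (w : {v : V // ndeg R v = 1}) (e : R.edgeSet) :
    ¬ (T3 R).Adj (ofLeaf w) (ofEdge e) := fun h => h.2.elim id id

@[simp] theorem T3_adj_ofLeaf_ofLeaf (w x : {v : V // ndeg R v = 1}) :
    ¬ (T3 R).Adj (ofLeaf w) (ofLeaf x) := fun h => h.2.elim id id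

@[simp] theorem T3_adj_ofVertex_ofEdge (v : V) (e : R.edgeSet) :
    (T3 R).Adj (ofVertex v) (ofEdge e) ↔ v ∈ (e : Sym2 V) :=
  ⟨fun h => h.2.elim id False.elim, fun h => ⟨by rintro ⟨⟩, Or.inl h⟩⟩

@[simp] theorem T3_adj_ofEdge_ofVertex (e : R.edgeSet) (v : V) :
    (T3 R).Adj (ofEdge e) (ofVertex v) ↔ v ∈ (e : Sym2 V) :=
  (adj_comm _ _ _).trans (T3_adj_ofVertex_ofEdge v e)

@[simp] theorem T3_adj_ofVertex_ofLeaf (v : V) (w : {v : V // ndeg R v = 1}) :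
    (T3 R).Adj (ofVertex v) (ofLeaf w) ↔ v = w :=
  ⟨fun h => h.2.elim id False.elim, fun h => ⟨by rintro ⟨⟩, Or.inl h⟩⟩

@[simp] theorem T3_adj_ofLeaf_ofVertex (w : {v : V // ndeg R v = 1}) (v : V) :
    (T3 R).Adj (ofLeaf w) (ofVertex v) ↔ v = w :=
  (adj_comm _ _ _).trans (T3_adj_ofVertex_ofLeaf v w)

variable [Fintype V] [Fintype R.edgeSet] [Fintype {v : V // ndeg R v = 1}]
  [DecidableRel (T3 R).Adj]

theorem sum_neighborFinset_T3_ofVertex {M : Type*} [AddCommMonoid M] [DecidableEq V] (a : V)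
    (f : T3Vert R → M) :
    ∑ u ∈ (T3 R).neighborFinset (ofVertex a), f u =
      ∑ e : R.edgeSet, (if a ∈ (e : Sym2 V) then f (ofEdge e) else 0) +
        ∑ w : {v // ndeg R v = 1}, if a = w then f (ofLeaf w) else 0 := by
  rw [neighborFinset_eq_filter, sum_filter, T3Vert.sum_eq]
  simp

theorem sum_neighborFinset_T3_ofEdge {M : Type*} [AddCommMonoid M] [DecidableEq V]
    (e : R.edgeSet) (f : T3Vert R → M) :
    ∑ u ∈ (T3 R).neighborFinset (ofEdge e), f u =
      ∑ v ∈ (e : Sym2 V).toFinset, f (ofVertex v) := by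
  rw [neighborFinset_eq_filter, sum_filter, T3Vert.sum_eq]
  simp only [T3_adj_ofEdge_ofVertex, T3_adj_ofEdge_ofEdge, T3_adj_ofEdge_ofLeaf, if_false,
    sum_const_zero, add_zero, ← sum_filter]
  congr 1
  ext
  simp

theorem sum_neighborFinset_T3_ofLeaf {M : Type*} [AddCommMonoid M]
    (w : {v // ndeg R v = 1}) (f : T3Vert R → M) :
    ∑ u ∈ (T3 R).neighborFinset (ofLeaf w), f u = f (ofVertex w) := by
  classical
  rw [neighborFinset_eq_filter, sum_filter, T3Vert.sum_eq]
  simp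

theorem degree_T3_ofVertex (a : V) :
    (T3 R).degree (ofVertex a) = ndeg R a + if ndeg R a = 1 then 1 else 0 := by
  classical
  rw [← card_neighborFinset_eq_degree, card_eq_sum_ones, sum_neighborFinset_T3_ofVertex,
    sum_subtype_ite_eq_coe, sum_boole, card_filter_mem_edgeSet]
  simp

theorem degree_T3_ofEdge (e : R.edgeSet) : (T3 R).degree (ofEdge e) = 2 := by
  classical
  rw [← card_neighborFinset_eq_degree, card_eq_sum_ones, sum_neighborFinset_T3_ofEdge,
    ← card_eq_sum_ones]
  exact Sym2.card_toFinset_of_not_isDiag _ (R.not_isDiag_of_mem_edgeSet e.2)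

theorem degree_T3_ofLeaf (w : {v : V // ndeg R v = 1}) : (T3 R).degree (ofLeaf w) = 1 := by
  rw [← card_neighborFinset_eq_degree, card_eq_sum_ones, sum_neighborFinset_T3_ofLeaf]

theorem two_le_degree_T3_ofVertex {a : V} (ha : ndeg R a = 1 ∨ ndeg R a = 3) :
    2 ≤ (T3 R).degree (ofVertex a) := by
  rcases ha with ha | ha <;> simp [degree_T3_ofVertex, ha]

theorem degree_T3_ne_zero (hR : ∀ v, ndeg R v = 1 ∨ ndeg R v = 3) (x : T3Vert R) :
    (T3 R).degree x ≠ 0 := by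
  rcases x with a | e | w
  · exact (two_le_degree_T3_ofVertex (hR a)).trans_lt' two_pos |>.ne'
  · exact (degree_T3_ofEdge e).trans_ne two_ne_zero
  · exact (degree_T3_ofLeaf w).trans_ne one_ne_zero

theorem sum_inv_degree_T3_ofVertex_le {a : V} (ha : ndeg R a = 1 ∨ ndeg R a = 3) :
    ∑ u ∈ (T3 R).neighborFinset (ofVertex a), ((T3 R).degree u : ℚ)⁻¹ ≤ 3 / 2 := by
  classical
  rw [sum_neighborFinset_T3_ofVertex]
  simp only [degree_T3_ofEdge, degree_T3_ofLeaf]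
  rw [sum_subtype_ite_eq_coe, ← sum_filter, sum_const, card_filter_mem_edgeSet]
  rcases ha with ha | ha <;> simp [ha] <;> norm_num

theorem sum_inv_degree_T3_ofEdge_le (hR : ∀ v, ndeg R v = 1 ∨ ndeg R v = 3) (e : R.edgeSet) :
    ∑ u ∈ (T3 R).neighborFinset (ofEdge e), ((T3 R).degree u : ℚ)⁻¹ ≤ 3 / 2 := by
  classical
  rw [sum_neighborFinset_T3_ofEdge]
  calc ∑ v ∈ (e : Sym2 V).toFinset, ((T3 R).degree (ofVertex v) : ℚ)⁻¹
      ≤ ∑ _v ∈ (e : Sym2 V).toFinset, (2 : ℚ)⁻¹ := by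
        gcongr with v
        exact_mod_cast two_le_degree_T3_ofVertex (hR v)
    _ = 1 := by
        rw [sum_const, Sym2.card_toFinset_of_not_isDiag _ (R.not_isDiag_of_mem_edgeSet e.2)]
        norm_num
    _ ≤ 3 / 2 := by norm_num

theorem sum_inv_degree_T3_ofLeaf_le (w : {v : V // ndeg R v = 1}) :
    ∑ u ∈ (T3 R).neighborFinset (ofLeaf w), ((T3 R).degree u : ℚ)⁻¹ ≤ 3 / 2 := by
  rw [sum_neighborFinset_T3_ofLeaf]
  exact Nat.cast_inv_le_one _ |>.trans (by norm_num)

theorem sum_inv_degree_T3_le (hR : ∀ v, ndeg R v = 1 ∨ ndeg R v = 3) (x : T3Vert R) :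
    ∑ u ∈ (T3 R).neighborFinset x, ((T3 R).degree u : ℚ)⁻¹ ≤ 3 / 2 := by
  rcases x with a | e | w
  exacts [sum_inv_degree_T3_ofVertex_le (hR a), sum_inv_degree_T3_ofEdge_le hR e,
    sum_inv_degree_T3_ofLeaf_le w]

end T3

theorem stmt14_general (m : ℕ) (R : SimpleGraph (Fin m))
    (hdegR : ∀ v, ndeg R v = 1 ∨ ndeg R v = 3) :
    ∀ S : Set (T3Vert R), (isoNum (T3 R) S : ℚ) ≤ 3/2 * S.ncard := by
  classical
  exact isoNum_le_mul_ncard_of_sum_inv_degree_le (T3 R) (degree_T3_ne_zero hdegR)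
    (sum_inv_degree_T3_le hdegR)

/-- Every tree `T_R ∈ 𝒯(3)` satisfies `iso(T - S) ≤ (3/2)|S|` for all `S ⊆ V(T)`. -/
theorem stmt14 (m : ℕ) (R : SimpleGraph (Fin m)) (hR : R.IsTree)
    (hdegR : ∀ v, ndeg R v = 1 ∨ ndeg R v = 3) :
    ∀ S : Set (T3Vert R), (isoNum (T3 R) S : ℚ) ≤ 3/2 * S.ncard :=
  stmt14_general m R hdegR
end

section
/- Let h be a fractional [1, k+1/2]-factor of a graph G with values in {0, 1/2, 1}, chosen so that the number of edges with nonzero value is minimum, and let F be the spanning subgraph induced by the edges of nonzero value. Then F contains no cycle of even length. -/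
/-!
An even cycle of `F` carries only the values `1/2` and `1`. Replacing them by `1, 0, 1, 0, …`
alternately along the cycle, each vertex of the cycle receives exactly `1` from its two cycle
edges instead of at least `1/2 + 1/2`, so all degrees stay in `[1, k + 1/2]`; but the edges set
to `0` leave the support, contradicting minimality.
-/

open SimpleGraph

namespace SimpleGraph.Walk

variable {V : Type*} {G : SimpleGraph V} {u : V}

lemma exists_lt_length_getVert_eq {p : G.Walk u u} (hp : ¬p.Nil) {x : V} (hx : x ∈ p.support) :
    ∃ j < p.length, p.getVert j = x := by
  obtain ⟨j, rfl, hj⟩ := mem_support_iff_exists_getVert.mp hx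
  rcases hj.lt_or_eq with hj | rfl
  · exact ⟨j, hj, rfl⟩
  · exact ⟨0, not_nil_iff_lt_length.mp hp, by simp⟩

lemma IsCycle.getVert_mem_getElem_edges_iff {p : G.Walk u u} (hp : p.IsCycle) {i j : ℕ}
    (hi : i < p.length) (hj : j < p.length) :
    p.getVert j ∈ p.edges[i]'(p.length_edges ▸ hi) ↔
      j = i ∨ j = i + 1 ∨ (i + 1 = p.length ∧ j = 0) := by
  have hinj {k l : ℕ} (hk : k < p.length) (hl : l < p.length) :
      p.getVert k = p.getVert l ↔ k = l :=
    hp.getVert_injOn'.eq_iff (by simp only [Set.mem_ofPred_eq]; omega)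
      (by simp only [Set.mem_ofPred_eq]; omega)
  rw [getElem_edges, Sym2.mem_iff, hinj hj hi]
  rcases Nat.lt_or_ge (i + 1) p.length with hi' | hi'
  · rw [hinj hj hi']
    omega
  · rw [show i + 1 = p.length by omega, getVert_length, hp.getVert_endpoint_iff hj.le]
    omega

variable [DecidableEq V]

def evenEdges {v : V} (p : G.Walk u v) : Finset (Sym2 V) :=
  {e ∈ p.edges.toFinset | Even (p.edges.idxOf e)}

lemma IsTrail.getElem_edges_mem_evenEdges_iff {v : V} {p : G.Walk u v} (hp : p.IsTrail)
    {i : ℕ} (hi : i < p.edges.length) : p.edges[i] ∈ p.evenEdges ↔ Even i := by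
  simp [evenEdges, hp.edges_nodup.idxOf_getElem]

lemma IsCycle.exists_incident_edges_eq_pair {p : G.Walk u u} (hp : p.IsCycle)
    (heven : Even p.length) {x : V} (hx : x ∈ p.support) :
    ∃ e₁ ∈ p.edges.toFinset ∩ p.evenEdges, ∃ e₂ ∈ p.edges.toFinset \ p.evenEdges,
      {e ∈ p.edges.toFinset | x ∈ e} = {e₁, e₂} := by
  obtain ⟨j, hj, rfl⟩ := exists_lt_length_getVert_eq hp.not_nil hx
  have hlen := hp.three_le_length
  have hE := p.length_edges
  obtain ⟨i, hi, hij⟩ : ∃ i < p.length, i + 1 = j ∨ (j = 0 ∧ i + 1 = p.length) := by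
    rcases Nat.eq_zero_or_pos j with rfl | hj0
    exacts [⟨p.length - 1, by omega, by omega⟩, ⟨j - 1, by omega, by omega⟩]
  have hpar : Even i ↔ ¬Even j := by
    rw [Nat.even_iff, Nat.even_iff]
    have := Nat.even_iff.mp heven
    omega
  have hinc (k : ℕ) (hk : k < p.length) : p.getVert j ∈ p.edges[k] ↔ k = j ∨ k = i := by
    rw [hp.getVert_mem_getElem_edges_iff hk hj]
    omega
  have hpair : {e ∈ p.edges.toFinset | p.getVert j ∈ e} = {p.edges[j], p.edges[i]} := by
    ext e
    simp only [Finset.mem_filter, List.mem_toFinset, Finset.mem_insert, Finset.mem_singleton,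
      List.mem_iff_getElem]
    constructor
    · rintro ⟨⟨k, hk, rfl⟩, hxk⟩
      rcases (hinc k (by omega)).mp hxk with rfl | rfl <;> simp
    · rintro (rfl | rfl)
      · exact ⟨⟨j, _, rfl⟩, (hinc j hj).mpr (.inl rfl)⟩
      · exact ⟨⟨i, _, rfl⟩, (hinc i hi).mpr (.inr rfl)⟩
  have hmem_inter (k : ℕ) (hk : k < p.length) :
      p.edges[k] ∈ p.edges.toFinset ∩ p.evenEdges ↔ Even k := by
    simp [hp.isTrail.getElem_edges_mem_evenEdges_iff]
  have hmem_sdiff (k : ℕ) (hk : k < p.length) :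
      p.edges[k] ∈ p.edges.toFinset \ p.evenEdges ↔ ¬Even k := by
    simp [hp.isTrail.getElem_edges_mem_evenEdges_iff]
  by_cases hje : Even j
  · exact ⟨_, (hmem_inter j hj).mpr hje, _, (hmem_sdiff i hi).mpr fun hie => hpar.mp hie hje,
      hpair⟩
  · exact ⟨_, (hmem_inter i hi).mpr (hpar.mpr hje), _, (hmem_sdiff j hj).mpr hje,
      hpair.trans (Finset.pair_comm _ _)⟩

lemma IsCycle.incident_edges_eq_empty_or_pair {p : G.Walk u u} (hp : p.IsCycle)
    (heven : Even p.length) (x : V) :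
    {e ∈ p.edges.toFinset | x ∈ e} = ∅ ∨
      ∃ e₁ ∈ p.edges.toFinset ∩ p.evenEdges, ∃ e₂ ∈ p.edges.toFinset \ p.evenEdges,
        {e ∈ p.edges.toFinset | x ∈ e} = {e₁, e₂} := by
  by_cases hx : x ∈ p.support
  · exact .inr (hp.exists_incident_edges_eq_pair heven hx)
  · refine .inl (Finset.filter_eq_empty_iff.mpr fun e he hxe => hx ?_)
    obtain ⟨y, rfl⟩ := Sym2.mem_iff_exists.mp hxe
    exact p.fst_mem_support_of_mem_edges (List.mem_toFinset.mp he)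

end SimpleGraph.Walk

section Exchange

variable {V : Type*} {G : SimpleGraph V} [DecidableEq V]

lemma hdeg_eq_sum_incidenceFinset [G.LocallyFinite] (f : Sym2 V → ℚ) (x : V) :
    hdeg G f x = ∑ e ∈ G.incidenceFinset x, f e := by
  rw [hdeg, ← coe_incidenceFinset, finsum_mem_coe_finset]

lemma hdeg_eq_sum_sdiff_add_sum [G.LocallyFinite] (f : Sym2 V → ℚ) {C : Finset (Sym2 V)}
    (hC : ↑C ⊆ G.edgeSet) (x : V) :
    hdeg G f x = ∑ e ∈ G.incidenceFinset x \ C, f e + ∑ e ∈ C with x ∈ e, f e := by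
  have hinter : G.incidenceFinset x ∩ C = {e ∈ C | x ∈ e} := by
    ext e
    simp only [Finset.mem_inter, mem_incidenceFinset, incidenceSet, Set.mem_ofPred_eq,
      Finset.mem_filter]
    exact ⟨fun ⟨⟨_, hx⟩, he⟩ => ⟨he, hx⟩, fun ⟨he, hx⟩ => ⟨⟨hC he, hx⟩, he⟩⟩
  rw [hdeg_eq_sum_incidenceFinset, ← hinter, add_comm, Finset.sum_inter_add_sum_sdiff]

def exchange (C M : Finset (Sym2 V)) (h : Sym2 V → ℚ) (e : Sym2 V) : ℚ :=
  if e ∈ C then if e ∈ M then 1 else 0 else h e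

variable {C M : Finset (Sym2 V)} {h : Sym2 V → ℚ}

lemma exchange_of_notMem {e : Sym2 V} (he : e ∉ C) : exchange C M h e = h e := if_neg he

lemma sum_exchange_pair {e₁ e₂ : Sym2 V} (he₁ : e₁ ∈ C ∩ M) (he₂ : e₂ ∈ C \ M) :
    ∑ e ∈ {e₁, e₂}, exchange C M h e = 1 := by
  rw [Finset.mem_inter] at he₁
  rw [Finset.mem_sdiff] at he₂
  rw [Finset.sum_pair (ne_of_mem_of_not_mem he₁.2 he₂.2)]
  simp [exchange, he₁, he₂]

theorem isFracFactor_exchange [G.LocallyFinite] {a b : ℚ} (ha : a ≤ 1)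
    (hh : IsFracFactor G a b h) (hC : ∀ e ∈ C, 1 / 2 ≤ h e)
    (hCM : ∀ x, {e ∈ C | x ∈ e} = ∅ ∨
      ∃ e₁ ∈ C ∩ M, ∃ e₂ ∈ C \ M, {e ∈ C | x ∈ e} = {e₁, e₂}) :
    IsFracFactor G a b (exchange C M h) := by
  obtain ⟨hsupp, hrange, hdegs⟩ := hh
  have hCG : ↑C ⊆ G.edgeSet := fun e he => hsupp e (by linarith [hC e he])
  refine ⟨fun e he => ?_, fun e => ?_, fun x => ?_⟩
  · by_cases heC : e ∈ C
    · exact hCG heC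
    · rw [exchange_of_notMem heC] at he
      exact hsupp e he
  · unfold exchange
    split_ifs <;> first | exact hrange e | norm_num
  · have hsplit (f : Sym2 V → ℚ) := hdeg_eq_sum_sdiff_add_sum f hCG x
    have hrest : ∑ e ∈ G.incidenceFinset x \ C, exchange C M h e =
        ∑ e ∈ G.incidenceFinset x \ C, h e :=
      Finset.sum_congr rfl fun e he => exchange_of_notMem (Finset.mem_sdiff.mp he).2
    have hx := hdegs x
    rw [hsplit] at hx
    rw [hsplit, hrest]
    rcases hCM x with hempty | ⟨e₁, he₁, e₂, he₂, hpair⟩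
    · simpa [hempty] using hx
    · have hrest_nonneg : 0 ≤ ∑ e ∈ G.incidenceFinset x \ C, h e :=
        Finset.sum_nonneg fun e _ => (hrange e).1
      have hne : e₁ ≠ e₂ := ne_of_mem_of_not_mem (Finset.mem_of_mem_inter_right he₁)
        (Finset.mem_sdiff.mp he₂).2
      rw [hpair, Finset.sum_pair hne] at hx
      have h₁ := hC e₁ (Finset.mem_of_mem_inter_left he₁)
      have h₂ := hC e₂ (Finset.mem_sdiff.mp he₂).1
      rw [hpair, sum_exchange_pair he₁ he₂]
      constructor <;> linarith [hx.1, hx.2]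

lemma support_exchange_ssubset (hC : ∀ e ∈ C, h e ≠ 0) {e₀ : Sym2 V} (he₀ : e₀ ∈ C \ M) :
    {e | exchange C M h e ≠ 0} ⊂ {e | h e ≠ 0} := by
  refine (Set.ssubset_iff_of_subset fun e he => ?_).mpr
    ⟨e₀, hC e₀ (Finset.mem_sdiff.mp he₀).1, ?_⟩
  · by_cases heC : e ∈ C
    · exact hC e heC
    · rwa [Set.mem_ofPred_eq, exchange_of_notMem heC] at he
  · rw [Finset.mem_sdiff] at he₀
    simp [exchange, he₀]

end Exchange

theorem stmt18_general {V : Type*} [Fintype V] (G : SimpleGraph V) (k : ℕ)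
    (h : Sym2 V → ℚ) (hfrac : IsFracFactor G 1 ((k : ℚ) + 1/2) h)
    (hval : ∀ e : Sym2 V, h e = 0 ∨ h e = 1/2 ∨ h e = 1)
    (hmin : ∀ h' : Sym2 V → ℚ, IsFracFactor G 1 ((k : ℚ) + 1/2) h' →
      (∀ e : Sym2 V, h' e = 0 ∨ h' e = 1/2 ∨ h' e = 1) →
      {e : Sym2 V | h e ≠ 0}.ncard ≤ {e : Sym2 V | h' e ≠ 0}.ncard) :
    ∀ (v : V) (p : (SimpleGraph.fromEdgeSet {e : Sym2 V | h e ≠ 0}).Walk v v),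
      p.IsCycle → ¬ Even p.length := by
  classical
  intro v p hp heven
  set C := p.edges.toFinset
  have hCh : ∀ e ∈ C, h e ≠ 0 := fun e he =>
    (edgeSet_fromEdgeSet _ ▸ p.edges_subset_edgeSet (List.mem_toFinset.mp he)).1
  have hChalf : ∀ e ∈ C, 1 / 2 ≤ h e := fun e he => by
    rcases hval e with h0 | h0 | h0
    · exact absurd h0 (hCh e he)
    all_goals norm_num [h0]
  have hfrac' :=
    isFracFactor_exchange le_rfl hfrac hChalf (hp.incident_edges_eq_empty_or_pair heven)
  have hval' (e : Sym2 V) : exchange C p.evenEdges h e = 0 ∨ exchange C p.evenEdges h e = 1/2 ∨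
      exchange C p.evenEdges h e = 1 := by
    unfold exchange
    split_ifs <;> first | exact hval e | norm_num
  obtain ⟨-, -, e₀, he₀, -⟩ := hp.exists_incident_edges_eq_pair heven p.start_mem_support
  exact (hmin _ hfrac' hval').not_gt
    (Set.ncard_lt_ncard (support_exchange_ssubset hCh he₀) (Set.toFinite _))

/-- If `h` is a fractional `[1, k+1/2]`-factor of `G` with values in `{0, 1/2, 1}`
whose support has the minimum number of edges, then the spanning subgraph `F` induced
by the support of `h` contains no cycle of even length. -/
theorem stmt18 {V : Type*} [Fintype V] (G : SimpleGraph V) (k : ℕ) (hk : 1 ≤ k)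
    (h : Sym2 V → ℚ) (hfrac : IsFracFactor G 1 ((k : ℚ) + 1/2) h)
    (hval : ∀ e : Sym2 V, h e = 0 ∨ h e = 1/2 ∨ h e = 1)
    (hmin : ∀ h' : Sym2 V → ℚ, IsFracFactor G 1 ((k : ℚ) + 1/2) h' →
      (∀ e : Sym2 V, h' e = 0 ∨ h' e = 1/2 ∨ h' e = 1) →
      {e : Sym2 V | h e ≠ 0}.ncard ≤ {e : Sym2 V | h' e ≠ 0}.ncard) :
    ∀ (v : V) (p : (SimpleGraph.fromEdgeSet {e : Sym2 V | h e ≠ 0}).Walk v v),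
      p.IsCycle → ¬ Even p.length :=
  stmt18_general G k h hfrac hval hmin
end
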